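/- arXiv:2101.01001 — 5 statements merged into one kernel-verified Lean document; each statement's English description precedes it below -/
import Mathlib

section
/- For every f ∈ L²(ℝ₊;ℂ), the function g defined by g(x) = x⁻² ∫₀ˣ (x−y) f(y) dy belongs to L²(ℝ₊) and satisfies ‖g‖_{L²} ≤ (4/3)‖f‖_{L²}. -/
open MeasureTheory Set Filter Topology intervalIntegral
open scoped ENNReal

noncomputable section

/-- The Lebesgue measure restricted to the open half-line `(0, ∞)`. -/
def halfLineMeasure : Measure ℝ := volume.restrict (Set.Ioi 0)

/-- `AC1On s f f''` : `f` is differentiable on `s` and its derivative is locally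
absolutely continuous on `s`, with a.e. second derivative `f''` (in the sense of the
fundamental theorem of calculus). -/
def AC1On (s : Set ℝ) (f f'' : ℝ → ℂ) : Prop :=
  (∀ x ∈ s, DifferentiableAt ℝ f x) ∧
  ∀ a ∈ s, ∀ b ∈ s, IntervalIntegrable f'' volume a b ∧
    deriv f b - deriv f a = ∫ t in a..b, f'' t

/-- `f` is AC¹ on `(0,∞)` with a.e. second derivative `f''`. -/
def AC1 (f f'' : ℝ → ℂ) : Prop := AC1On (Set.Ioi 0) f f''

/-- The Bessel differential expression `L_α f = -f'' + (α - 1/4) x⁻² f`,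
written using an explicit second derivative `f''`. -/
def besselOp (α : ℂ) (f f'' : ℝ → ℂ) : ℝ → ℂ :=
  fun x => -f'' x + (α - 1/4) * ((x : ℂ)^2)⁻¹ * f x

/-- Membership in the minimal second-order Sobolev space `H₀²((0,∞))`, with an explicit
second derivative `f''`. -/
def MemH02With (f f'' : ℝ → ℂ) : Prop :=
  MemLp f 2 halfLineMeasure ∧ AC1 f f'' ∧ MemLp f'' 2 halfLineMeasure ∧
  Tendsto f (𝓝[>] 0) (𝓝 0) ∧ Tendsto (deriv f) (𝓝[>] 0) (𝓝 0)

/-- Membership in the minimal second-order Sobolev space `H₀²((0,∞))`. -/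
def MemH02 (f : ℝ → ℂ) : Prop := ∃ f'', MemH02With f f''

/-- Membership in the minimal first-order Sobolev space `H₀¹((0,∞))`, with an explicit
derivative `f'`. -/
def MemH01With (f f' : ℝ → ℂ) : Prop :=
  MemLp f 2 halfLineMeasure ∧ MemLp f' 2 halfLineMeasure ∧
  (∀ a ∈ Set.Ioi (0:ℝ), ∀ b ∈ Set.Ioi (0:ℝ),
    IntervalIntegrable f' volume a b ∧ f b - f a = ∫ t in a..b, f' t) ∧
  Tendsto f (𝓝[>] 0) (𝓝 0)

/-- The distance from `α` to the parabola `P = {(1 + iω)² : ω ∈ ℝ}`. -/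
def distParabola (α : ℂ) : ℝ := ⨅ ω : ℝ, ‖α - (1 + (ω : ℂ) * Complex.I)^2‖

/-- `ξ ∈ C_c^∞[0,∞)` with `ξ = 1` near `0`. -/
def IsCutoff (ξ : ℝ → ℂ) : Prop :=
  ContDiff ℝ (⊤ : ℕ∞) ξ ∧ HasCompactSupport ξ ∧ ∃ ε > (0:ℝ), ∀ x < ε, ξ x = 1

/-- The operator `Q_α = x⁻² G_α^→` for `α = m²`. -/
def Qop (m : ℂ) (f : ℝ → ℂ) : ℝ → ℂ := fun x =>
  (1 / (2 * m)) * ∫ y in Set.Ioo (0:ℝ) x,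
    ((x : ℂ) ^ (-(3:ℂ)/2 + m) * (y : ℂ) ^ ((1:ℂ)/2 - m)
      - (x : ℂ) ^ (-(3:ℂ)/2 - m) * (y : ℂ) ^ ((1:ℂ)/2 + m)) * f y

/-- The two-sided Green's operator `G_m`. -/
def Gop (m : ℂ) (g : ℝ → ℂ) : ℝ → ℂ := fun x =>
  (1 / (2 * m)) * ((x : ℂ) ^ ((1:ℂ)/2 + m) * ∫ y in Set.Ioi x, (y : ℂ) ^ ((1:ℂ)/2 - m) * g y
    + (x : ℂ) ^ ((1:ℂ)/2 - m) * ∫ y in Set.Ioo (0:ℝ) x, (y : ℂ) ^ ((1:ℂ)/2 + m) * g y)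

/-- The two-sided Green's kernel `G_m(x,y)`. -/
def GKer (m : ℂ) (x y : ℝ) : ℂ :=
  (1 / (2 * m)) * ((if x < y then (x : ℂ) ^ ((1:ℂ)/2 + m) * (y : ℂ) ^ ((1:ℂ)/2 - m) else 0)
    + (if y < x then (x : ℂ) ^ ((1:ℂ)/2 - m) * (y : ℂ) ^ ((1:ℂ)/2 + m) else 0))

/-- The operator `Z_m = x⁻² G_m`. -/
def Zop (m : ℂ) (g : ℝ → ℂ) : ℝ → ℂ := fun x =>
  (1 / (2 * m)) * ((x : ℂ) ^ (-(3:ℂ)/2 + m) * ∫ y in Set.Ioi x, (y : ℂ) ^ ((1:ℂ)/2 - m) * g y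
    + (x : ℂ) ^ (-(3:ℂ)/2 - m) * ∫ y in Set.Ioo (0:ℝ) x, (y : ℂ) ^ ((1:ℂ)/2 + m) * g y)

lemma rellichA {x : ℝ} (hx : 0 < x) :
    ∫⁻ y in Set.Ioo (0:ℝ) x, ENNReal.ofReal ((x - y) * y ^ (-(1/2) : ℝ)) =
      ENNReal.ofReal ((4/3) * x ^ ((3:ℝ)/2)) := by
  have hint1 : IntervalIntegrable (fun y : ℝ => y ^ (-(1/2):ℝ)) volume 0 x :=
    intervalIntegrable_rpow' (by norm_num)
  have hint2 : IntervalIntegrable (fun y : ℝ => y ^ ((1/2):ℝ)) volume 0 x :=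
    intervalIntegrable_rpow' (by norm_num)
  have heq : ∀ y ∈ Set.Ioo (0:ℝ) x, (x - y) * y ^ (-(1/2):ℝ)
      = x * y ^ (-(1/2):ℝ) - y ^ ((1/2):ℝ) := by
    intro y hy
    have hy0 : (0:ℝ) < y := hy.1
    have h : y * y ^ (-(1/2):ℝ) = y ^ ((1/2):ℝ) := by
      nth_rewrite 1 [← Real.rpow_one y]
      rw [← Real.rpow_add hy0]; norm_num
    rw [← h]; ring
  have hI : IntegrableOn (fun y : ℝ => (x - y) * y ^ (-(1/2):ℝ)) (Set.Ioo 0 x) := by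
    have : IntegrableOn (fun y : ℝ => x * y ^ (-(1/2):ℝ) - y ^ ((1/2):ℝ)) (Set.Ioo 0 x) := by
      have := ((hint1.const_mul x).sub hint2)
      rw [intervalIntegrable_iff_integrableOn_Ioo_of_le hx.le] at this
      exact this
    exact this.congr_fun (fun y hy => (heq y hy).symm) measurableSet_Ioo
  rw [← ofReal_integral_eq_lintegral_ofReal hI]
  · congr 1
    rw [setIntegral_congr_fun measurableSet_Ioo heq]
    rw [← integral_Ioc_eq_integral_Ioo, ← intervalIntegral.integral_of_le hx.le]
    rw [intervalIntegral.integral_sub (hint1.const_mul x) hint2,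
      intervalIntegral.integral_const_mul, integral_rpow (Or.inl (by norm_num)),
      integral_rpow (Or.inl (by norm_num))]
    have h1 : x * x ^ ((1/2):ℝ) = x ^ ((3:ℝ)/2) := by
      nth_rewrite 1 [← Real.rpow_one x]
      rw [← Real.rpow_add hx]; norm_num
    rw [Real.zero_rpow (by norm_num), Real.zero_rpow (by norm_num)]
    norm_num
    nlinarith [h1]
  · filter_upwards [self_mem_ae_restrict (measurableSet_Ioo : MeasurableSet (Set.Ioo (0:ℝ) x))] with y hy
    have := hy.1; have := hy.2
    exact mul_nonneg (by linarith [hy.2]) (Real.rpow_nonneg hy.1.le _)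

lemma rellichB {y : ℝ} (hy : 0 < y) :
    ∫⁻ x in Set.Ioi y, ENNReal.ofReal ((x - y) * x ^ (-(5:ℝ)/2)) =
      ENNReal.ofReal ((4/3) * y ^ (-(1/2) : ℝ)) := by
  have hint1 : IntegrableOn (fun x : ℝ => x ^ (-(3:ℝ)/2)) (Set.Ioi y) :=
    integrableOn_Ioi_rpow_of_lt (by norm_num) hy
  have hint2 : IntegrableOn (fun x : ℝ => x ^ (-(5:ℝ)/2)) (Set.Ioi y) :=
    integrableOn_Ioi_rpow_of_lt (by norm_num) hy
  have heq : ∀ x ∈ Set.Ioi y, (x - y) * x ^ (-(5:ℝ)/2)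
      = x ^ (-(3:ℝ)/2) - y * x ^ (-(5:ℝ)/2) := by
    intro x hx
    have hx0 : (0:ℝ) < x := hy.trans hx
    have h : x * x ^ (-(5:ℝ)/2) = x ^ (-(3:ℝ)/2) := by
      nth_rewrite 1 [← Real.rpow_one x]
      rw [← Real.rpow_add hx0]; norm_num
    rw [← h]; ring
  have h3 : IntegrableOn (fun x : ℝ => x ^ (-(3:ℝ)/2) - y * x ^ (-(5:ℝ)/2)) (Set.Ioi y) :=
    hint1.sub (hint2.const_mul y)
  have hI : IntegrableOn (fun x : ℝ => (x - y) * x ^ (-(5:ℝ)/2)) (Set.Ioi y) :=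
    h3.congr_fun (fun x hx => (heq x hx).symm) measurableSet_Ioi
  rw [← ofReal_integral_eq_lintegral_ofReal hI]
  · congr 1
    rw [setIntegral_congr_fun measurableSet_Ioi heq,
      integral_sub hint1 (hint2.const_mul y), MeasureTheory.integral_const_mul,
      integral_Ioi_rpow_of_lt (by norm_num) hy, integral_Ioi_rpow_of_lt (by norm_num) hy]
    have h1 : y * y ^ (-(3:ℝ)/2) = y ^ (-(1:ℝ)/2) := by
      nth_rewrite 1 [← Real.rpow_one y]
      rw [← Real.rpow_add hy]; norm_num
    norm_num
    nlinarith [h1]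
  · filter_upwards [self_mem_ae_restrict (measurableSet_Ioi : MeasurableSet (Set.Ioi y))] with x hx
    exact mul_nonneg (by simp at hx; linarith) (Real.rpow_nonneg (hy.trans hx).le _)

lemma rellichCS {x : ℝ} (hx : 0 < x) (φ : ℝ → ℝ≥0∞) (hφ : Measurable φ) :
    ∫⁻ y in Set.Ioo (0:ℝ) x, ENNReal.ofReal (x - y) * φ y ≤
      ENNReal.ofReal ((4/3) * x ^ ((3:ℝ)/2)) ^ ((1:ℝ)/2) *
      (∫⁻ y in Set.Ioo (0:ℝ) x,
        ENNReal.ofReal (x - y) * (ENNReal.ofReal y) ^ ((1:ℝ)/2) * φ y ^ (2:ℝ)) ^ ((1:ℝ)/2) := by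
  set u : ℝ → ℝ≥0∞ := fun y =>
    ENNReal.ofReal (x - y) ^ ((1:ℝ)/2) * (ENNReal.ofReal y) ^ (-(1:ℝ)/4) with hu
  set v : ℝ → ℝ≥0∞ := fun y =>
    ENNReal.ofReal (x - y) ^ ((1:ℝ)/2) * (ENNReal.ofReal y) ^ ((1:ℝ)/4) * φ y with hv
  have hum : Measurable u :=
    ((ENNReal.measurable_ofReal.comp (measurable_const.sub measurable_id)).pow
      measurable_const).mul (ENNReal.measurable_ofReal.pow measurable_const)
  have hvm : Measurable v :=
    (((ENNReal.measurable_ofReal.comp (measurable_const.sub measurable_id)).pow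
      measurable_const).mul (ENNReal.measurable_ofReal.pow measurable_const)).mul hφ
  have hconj : Real.HolderConjugate 2 2 := Real.HolderConjugate.two_two
  have hCS := ENNReal.lintegral_mul_le_Lp_mul_Lq (volume.restrict (Set.Ioo (0:ℝ) x)) hconj
    hum.aemeasurable hvm.aemeasurable
  have h1 : ∫⁻ y in Set.Ioo (0:ℝ) x, ENNReal.ofReal (x - y) * φ y
      = ∫⁻ y in Set.Ioo (0:ℝ) x, (u * v) y := by
    apply setLIntegral_congr_fun measurableSet_Ioo
    intro y hy
    have hy1 : (0:ℝ) < y := hy.1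
    have hy2 : y < x := hy.2
    have ha0 : ENNReal.ofReal (x - y) ≠ 0 := by
      simp [ENNReal.ofReal_eq_zero]; linarith
    have hb0 : ENNReal.ofReal y ≠ 0 := by
      simp [ENNReal.ofReal_eq_zero]; linarith
    show ENNReal.ofReal (x - y) * φ y = u y * v y
    rw [hu, hv]
    dsimp only
    rw [show ENNReal.ofReal (x - y) ^ ((1:ℝ)/2) * (ENNReal.ofReal y) ^ (-(1:ℝ)/4) *
        (ENNReal.ofReal (x - y) ^ ((1:ℝ)/2) * (ENNReal.ofReal y) ^ ((1:ℝ)/4) * φ y)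
        = (ENNReal.ofReal (x - y) ^ ((1:ℝ)/2) * ENNReal.ofReal (x - y) ^ ((1:ℝ)/2)) *
          ((ENNReal.ofReal y) ^ (-(1:ℝ)/4) * (ENNReal.ofReal y) ^ ((1:ℝ)/4)) * φ y from by ring]
    rw [← ENNReal.rpow_add _ _ ha0 ENNReal.ofReal_ne_top,
      ← ENNReal.rpow_add _ _ hb0 ENNReal.ofReal_ne_top]
    norm_num
  have h2 : ∫⁻ y in Set.Ioo (0:ℝ) x, u y ^ (2:ℝ)
      = ENNReal.ofReal ((4/3) * x ^ ((3:ℝ)/2)) := by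
    rw [← rellichA hx]
    apply setLIntegral_congr_fun measurableSet_Ioo
    intro y hy
    have hy1 : (0:ℝ) < y := hy.1
    have hy2 : y < x := hy.2
    rw [hu]
    dsimp only
    rw [ENNReal.mul_rpow_of_nonneg _ _ (by norm_num : (0:ℝ) ≤ 2),
      ← ENNReal.rpow_mul, ← ENNReal.rpow_mul]
    norm_num
    rw [ENNReal.ofReal_rpow_of_pos hy1, ← ENNReal.ofReal_mul (by linarith : (0:ℝ) ≤ x - y)]
  have h3 : ∫⁻ y in Set.Ioo (0:ℝ) x, v y ^ (2:ℝ)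
      = ∫⁻ y in Set.Ioo (0:ℝ) x,
        ENNReal.ofReal (x - y) * (ENNReal.ofReal y) ^ ((1:ℝ)/2) * φ y ^ (2:ℝ) := by
    apply setLIntegral_congr_fun measurableSet_Ioo
    intro y hy
    rw [hv]
    dsimp only
    rw [ENNReal.mul_rpow_of_nonneg _ _ (by norm_num : (0:ℝ) ≤ 2),
      ENNReal.mul_rpow_of_nonneg _ _ (by norm_num : (0:ℝ) ≤ 2),
      ← ENNReal.rpow_mul, ← ENNReal.rpow_mul]
    norm_num
  calc ∫⁻ y in Set.Ioo (0:ℝ) x, ENNReal.ofReal (x - y) * φ y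
      = ∫⁻ y in Set.Ioo (0:ℝ) x, (u * v) y := h1
    _ ≤ (∫⁻ y in Set.Ioo (0:ℝ) x, u y ^ (2:ℝ)) ^ ((1:ℝ)/2) *
        (∫⁻ y in Set.Ioo (0:ℝ) x, v y ^ (2:ℝ)) ^ ((1:ℝ)/2) := hCS
    _ = _ := by rw [h2, h3]

lemma rellichSq {x : ℝ} (hx : 0 < x) (B c : ℝ≥0∞)
    (h : c ≤ ENNReal.ofReal (x ^ (-(2:ℝ))) *
      (ENNReal.ofReal ((4/3) * x ^ ((3:ℝ)/2)) ^ ((1:ℝ)/2) * B ^ ((1:ℝ)/2))) :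
    c ^ (2:ℝ) ≤ ENNReal.ofReal ((4/3) * x ^ (-(5:ℝ)/2)) * B := by
  have h2 := ENNReal.rpow_le_rpow h (by norm_num : (0:ℝ) ≤ 2)
  refine h2.trans (le_of_eq ?_)
  rw [ENNReal.mul_rpow_of_nonneg _ _ (by norm_num : (0:ℝ) ≤ 2),
    ENNReal.mul_rpow_of_nonneg _ _ (by norm_num : (0:ℝ) ≤ 2),
    ← ENNReal.rpow_mul, ← ENNReal.rpow_mul,
    show (1:ℝ)/2*2 = 1 by norm_num, ENNReal.rpow_one, ENNReal.rpow_one,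
    ENNReal.ofReal_rpow_of_pos (by positivity), ← Real.rpow_mul hx.le,
    show (-(2:ℝ)) * 2 = ((-4:ℝ)) by norm_num,
    ← mul_assoc, ← ENNReal.ofReal_mul (by positivity)]
  congr 2
  have hxx : x ^ ((-4:ℝ)) * x ^ ((3:ℝ)/2) = x ^ (-(5:ℝ)/2) := by
    rw [← Real.rpow_add hx]; norm_num
  calc x ^ ((-4:ℝ)) * (4/3 * x ^ ((3:ℝ)/2)) = 4/3 * (x ^ ((-4:ℝ)) * x ^ ((3:ℝ)/2)) := by ring
    _ = 4/3 * x ^ (-(5:ℝ)/2) := by rw [hxx]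

lemma rellichTonelli (φ : ℝ → ℝ≥0∞) (hφ : Measurable φ) (hφt : ∀ y, φ y ≠ ⊤) :
    ∫⁻ x in Set.Ioi (0:ℝ), ENNReal.ofReal ((4/3) * x ^ (-(5:ℝ)/2)) *
      ∫⁻ y in Set.Ioo (0:ℝ) x,
        ENNReal.ofReal (x - y) * (ENNReal.ofReal y) ^ ((1:ℝ)/2) * φ y ^ (2:ℝ)
    = ENNReal.ofReal (16/9) * ∫⁻ y in Set.Ioi (0:ℝ), φ y ^ (2:ℝ) := by
  set H : ℝ × ℝ → ℝ≥0∞ := fun p =>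
    if 0 < p.2 ∧ p.2 < p.1 then
      ENNReal.ofReal ((4/3) * p.1 ^ (-(5:ℝ)/2)) *
        (ENNReal.ofReal (p.1 - p.2) * (ENNReal.ofReal p.2) ^ ((1:ℝ)/2) * φ p.2 ^ (2:ℝ))
    else 0 with hH
  have hset : MeasurableSet {p : ℝ × ℝ | 0 < p.2 ∧ p.2 < p.1} :=
    (measurableSet_lt measurable_const measurable_snd).inter
      (measurableSet_lt measurable_snd measurable_fst)
  have hHm : Measurable H := by
    apply Measurable.ite hset ?_ measurable_const
    apply Measurable.mul
    · exact ENNReal.measurable_ofReal.comp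
        (measurable_const.mul (measurable_fst.pow measurable_const))
    · exact ((ENNReal.measurable_ofReal.comp (measurable_fst.sub measurable_snd)).mul
        ((ENNReal.measurable_ofReal.comp measurable_snd).pow measurable_const)).mul
        ((hφ.comp measurable_snd).pow measurable_const)
  have hLHS : ∫⁻ x in Set.Ioi (0:ℝ), ENNReal.ofReal ((4/3) * x ^ (-(5:ℝ)/2)) *
      ∫⁻ y in Set.Ioo (0:ℝ) x,
        ENNReal.ofReal (x - y) * (ENNReal.ofReal y) ^ ((1:ℝ)/2) * φ y ^ (2:ℝ)
      = ∫⁻ x, ∫⁻ y, H (x, y) := by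
    rw [← lintegral_indicator measurableSet_Ioi]
    apply lintegral_congr
    intro x
    rw [Set.indicator_apply]
    by_cases hx : x ∈ Set.Ioi (0:ℝ)
    · rw [if_pos hx]
      rw [← lintegral_const_mul' _ _ ENNReal.ofReal_ne_top,
        ← lintegral_indicator measurableSet_Ioo]
      apply lintegral_congr
      intro y
      simp only [hH, Set.indicator_apply, Set.mem_Ioo]
    · rw [if_neg hx]
      symm
      rw [← lintegral_zero]
      apply lintegral_congr
      intro y
      simp only [hH]
      simp only [Set.mem_Ioi, not_lt] at hx
      rw [if_neg]
      rintro ⟨h1, h2⟩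
      linarith
  have hswap : ∫⁻ x, ∫⁻ y, H (x, y) = ∫⁻ y, ∫⁻ x, H (x, y) :=
    lintegral_lintegral_swap hHm.aemeasurable
  have hRHS : ∫⁻ y, ∫⁻ x, H (x, y)
      = ENNReal.ofReal (16/9) * ∫⁻ y in Set.Ioi (0:ℝ), φ y ^ (2:ℝ) := by
    rw [← lintegral_const_mul' _ _ ENNReal.ofReal_ne_top,
      ← lintegral_indicator measurableSet_Ioi]
    apply lintegral_congr
    intro y
    rw [Set.indicator_apply]
    by_cases hy : y ∈ Set.Ioi (0:ℝ)
    · rw [if_pos hy]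
      rw [Set.mem_Ioi] at hy
      have hK : (ENNReal.ofReal y) ^ ((1:ℝ)/2) * φ y ^ (2:ℝ) ≠ ⊤ :=
        ENNReal.mul_ne_top (ENNReal.rpow_ne_top_of_nonneg (by norm_num) ENNReal.ofReal_ne_top)
          (ENNReal.rpow_ne_top_of_nonneg (by norm_num) (hφt y))
      have h1 : ∀ x, H (x, y) = (Set.Ioi y).indicator
          (fun x => ENNReal.ofReal ((4/3) * x ^ (-(5:ℝ)/2)) * ENNReal.ofReal (x - y)) x *
          ((ENNReal.ofReal y) ^ ((1:ℝ)/2) * φ y ^ (2:ℝ)) := by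
        intro x
        simp only [hH, Set.indicator_apply, Set.mem_Ioi]
        by_cases hxy : y < x
        · rw [if_pos ⟨hy, hxy⟩, if_pos hxy]; ring
        · rw [if_neg (fun h => hxy h.2), if_neg hxy, zero_mul]
      calc ∫⁻ x, H (x, y)
          = ∫⁻ x, (Set.Ioi y).indicator
              (fun x => ENNReal.ofReal ((4/3) * x ^ (-(5:ℝ)/2)) * ENNReal.ofReal (x - y)) x *
              ((ENNReal.ofReal y) ^ ((1:ℝ)/2) * φ y ^ (2:ℝ)) := lintegral_congr h1
        _ = (∫⁻ x, (Set.Ioi y).indicator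
              (fun x => ENNReal.ofReal ((4/3) * x ^ (-(5:ℝ)/2)) * ENNReal.ofReal (x - y)) x) *
              ((ENNReal.ofReal y) ^ ((1:ℝ)/2) * φ y ^ (2:ℝ)) := by
            rw [lintegral_mul_const' _ _ hK]
        _ = (∫⁻ x in Set.Ioi y,
              ENNReal.ofReal ((4/3) * x ^ (-(5:ℝ)/2)) * ENNReal.ofReal (x - y)) *
              ((ENNReal.ofReal y) ^ ((1:ℝ)/2) * φ y ^ (2:ℝ)) := by
            rw [lintegral_indicator measurableSet_Ioi]
        _ = (ENNReal.ofReal (4/3) * ENNReal.ofReal ((4/3) * y ^ (-(1/2):ℝ))) *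
              ((ENNReal.ofReal y) ^ ((1:ℝ)/2) * φ y ^ (2:ℝ)) := by
            congr 1
            rw [← rellichB hy, ← lintegral_const_mul' _ _ ENNReal.ofReal_ne_top]
            apply setLIntegral_congr_fun measurableSet_Ioi
            intro x hx
            rw [Set.mem_Ioi] at hx
            have hx0 : (0:ℝ) < x := hy.trans hx
            dsimp only
            rw [← ENNReal.ofReal_mul (by positivity),
              ← ENNReal.ofReal_mul (by norm_num : (0:ℝ) ≤ 4/3)]
            congr 1
            ring
        _ = ENNReal.ofReal (16/9) * φ y ^ (2:ℝ) := by
            rw [ENNReal.ofReal_rpow_of_pos hy,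
              ← ENNReal.ofReal_mul (by norm_num : (0:ℝ) ≤ 4/3), ← mul_assoc,
              ← ENNReal.ofReal_mul (by positivity)]
            congr 2
            have h0 : y ^ (-(1/2):ℝ) * y ^ ((1:ℝ)/2) = 1 := by
              rw [← Real.rpow_add hy]; norm_num
            calc (4:ℝ)/3 * (4/3 * y ^ (-(1/2):ℝ)) * y ^ ((1:ℝ)/2)
                = 16/9 * (y ^ (-(1/2):ℝ) * y ^ ((1:ℝ)/2)) := by ring
              _ = 16/9 := by rw [h0]; ring
        _ = _ := by ring
    · rw [if_neg hy]
      symm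
      rw [← lintegral_zero]
      apply lintegral_congr
      intro x
      simp only [hH]
      rw [if_neg]
      rintro ⟨h1, h2⟩
      exact hy (Set.mem_Ioi.mpr h1)
  rw [hLHS, hswap, hRHS]

/-- one-dimensional Rellich-type inequality. -/
theorem rellich_type_inequality (f : ℝ → ℂ) (hf : MemLp f 2 halfLineMeasure) :
    MemLp (fun x : ℝ => ((x : ℂ)^2)⁻¹ * ∫ y in Set.Ioo (0:ℝ) x, ((x : ℂ) - (y : ℂ)) * f y)
      2 halfLineMeasure ∧
    eLpNorm (fun x : ℝ => ((x : ℂ)^2)⁻¹ * ∫ y in Set.Ioo (0:ℝ) x, ((x : ℂ) - (y : ℂ)) * f y)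
      2 halfLineMeasure ≤ (4/3 : ℝ≥0∞) * eLpNorm f 2 halfLineMeasure := by
  have hμdef : halfLineMeasure = volume.restrict (Set.Ioi 0) := rfl
  obtain ⟨hsm, hfin⟩ := hf
  set f₀ : ℝ → ℂ := hsm.mk f with hf₀def
  have hmf₀ : StronglyMeasurable f₀ := hsm.stronglyMeasurable_mk
  have hae : f =ᵐ[halfLineMeasure] f₀ := hsm.ae_eq_mk
  -- replace f by its measurable representative inside the integral
  have hinteq : ∀ x : ℝ, (∫ y in Set.Ioo (0:ℝ) x, ((x:ℂ) - (y:ℂ)) * f y)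
      = ∫ y in Set.Ioo (0:ℝ) x, ((x:ℂ) - (y:ℂ)) * f₀ y := by
    intro x
    apply MeasureTheory.integral_congr_ae
    have h1 : f =ᵐ[volume.restrict (Set.Ioo (0:ℝ) x)] f₀ := by
      rw [hμdef] at hae
      exact ae_restrict_of_ae_restrict_of_subset Set.Ioo_subset_Ioi_self hae
    filter_upwards [h1] with y hy
    rw [hy]
  set g₀ : ℝ → ℂ := fun x : ℝ => ((x:ℂ)^2)⁻¹ * ∫ y in Set.Ioo (0:ℝ) x, ((x:ℂ) - (y:ℂ)) * f₀ y
    with hg₀def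
  have hfun : (fun x : ℝ => ((x:ℂ)^2)⁻¹ * ∫ y in Set.Ioo (0:ℝ) x, ((x:ℂ) - (y:ℂ)) * f y) = g₀ := by
    funext x; rw [hg₀def, hinteq x]
  rw [hfun]
  -- measurability of g₀
  have hg₀sm : StronglyMeasurable g₀ := by
    have hset : MeasurableSet {p : ℝ × ℝ | 0 < p.2 ∧ p.2 < p.1} :=
      (measurableSet_lt measurable_const measurable_snd).inter
        (measurableSet_lt measurable_snd measurable_fst)
    have hFsm : StronglyMeasurable fun p : ℝ × ℝ =>
        (Set.Ioo (0:ℝ) p.1).indicator (fun y => ((p.1:ℂ) - (y:ℂ)) * f₀ y) p.2 := by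
      have heq : (fun p : ℝ × ℝ =>
          (Set.Ioo (0:ℝ) p.1).indicator (fun y => ((p.1:ℂ) - (y:ℂ)) * f₀ y) p.2)
          = {p : ℝ × ℝ | 0 < p.2 ∧ p.2 < p.1}.indicator
              (fun p => ((p.1:ℂ) - (p.2:ℂ)) * f₀ p.2) := by
        funext p
        rw [Set.indicator_apply, Set.indicator_apply]
        simp only [Set.mem_Ioo, Set.mem_setOf_eq]
      rw [heq]
      refine StronglyMeasurable.indicator ?_ hset
      exact (((Complex.measurable_ofReal.comp measurable_fst).sub
        (Complex.measurable_ofReal.comp measurable_snd)).stronglyMeasurable).mul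
        (hmf₀.comp_measurable measurable_snd)
    have h1 : StronglyMeasurable fun x : ℝ =>
        ∫ y, (Set.Ioo (0:ℝ) x).indicator (fun y => ((x:ℂ) - (y:ℂ)) * f₀ y) y :=
      hFsm.integral_prod_right'
    have h2 : (fun x : ℝ => ∫ y in Set.Ioo (0:ℝ) x, ((x:ℂ) - (y:ℂ)) * f₀ y)
        = fun x : ℝ => ∫ y, (Set.Ioo (0:ℝ) x).indicator (fun y => ((x:ℂ) - (y:ℂ)) * f₀ y) y := by
      funext x; rw [MeasureTheory.integral_indicator measurableSet_Ioo]
    rw [hg₀def]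
    exact ((Complex.measurable_ofReal.pow_const 2).inv.stronglyMeasurable).mul (h2 ▸ h1)
  -- the enorm of f₀
  set φ : ℝ → ℝ≥0∞ := fun y => (‖f₀ y‖₊ : ℝ≥0∞) with hφdef
  have hφm : Measurable φ := hmf₀.measurable.enorm
  have hφt : ∀ y, φ y ≠ ⊤ := fun y => ENNReal.coe_ne_top
  set B : ℝ → ℝ≥0∞ := fun x => ∫⁻ y in Set.Ioo (0:ℝ) x,
      ENNReal.ofReal (x - y) * (ENNReal.ofReal y) ^ ((1:ℝ)/2) * φ y ^ (2:ℝ) with hBdef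
  -- the key pointwise bound
  have key : ∀ x ∈ Set.Ioi (0:ℝ),
      (‖g₀ x‖₊ : ℝ≥0∞) ^ (2:ℝ) ≤ ENNReal.ofReal ((4/3) * x ^ (-(5:ℝ)/2)) * B x := by
    intro x hx
    rw [Set.mem_Ioi] at hx
    apply rellichSq hx
    have hnorm : (‖((x:ℂ)^2)⁻¹‖₊ : ℝ≥0∞) = ENNReal.ofReal (x ^ (-(2:ℝ))) := by
      have hx2 : ((x:ℂ)^2)⁻¹ = ((((x^2)⁻¹ : ℝ)) : ℂ) := by push_cast; ring
      rw [hx2, Complex.nnnorm_real, ← enorm_eq_nnnorm, Real.enorm_eq_ofReal (by positivity)]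
      congr 1
      rw [Real.rpow_neg hx.le, show ((2:ℝ)) = ((2:ℕ):ℝ) by norm_num, Real.rpow_natCast]
    have h1 : (‖g₀ x‖₊ : ℝ≥0∞) ≤ ENNReal.ofReal (x ^ (-(2:ℝ))) *
        ∫⁻ y in Set.Ioo (0:ℝ) x, ENNReal.ofReal (x - y) * φ y := by
      calc (‖g₀ x‖₊ : ℝ≥0∞)
          = ENNReal.ofReal (x ^ (-(2:ℝ))) *
            (‖∫ y in Set.Ioo (0:ℝ) x, ((x:ℂ) - (y:ℂ)) * f₀ y‖₊ : ℝ≥0∞) := by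
            rw [hg₀def]
            dsimp only
            rw [nnnorm_mul, ENNReal.coe_mul, hnorm]
        _ ≤ ENNReal.ofReal (x ^ (-(2:ℝ))) *
            ∫⁻ y in Set.Ioo (0:ℝ) x, (‖((x:ℂ) - (y:ℂ)) * f₀ y‖₊ : ℝ≥0∞) := by
            gcongr
            exact enorm_integral_le_lintegral_enorm _
        _ = ENNReal.ofReal (x ^ (-(2:ℝ))) *
            ∫⁻ y in Set.Ioo (0:ℝ) x, ENNReal.ofReal (x - y) * φ y := by
            congr 1
            apply setLIntegral_congr_fun measurableSet_Ioo
            intro y hy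
            dsimp only
            rw [nnnorm_mul, ENNReal.coe_mul]
            congr 1
            have hxy : ((x:ℂ) - (y:ℂ)) = (((x - y : ℝ)) : ℂ) := by push_cast; ring
            rw [hxy, Complex.nnnorm_real, ← enorm_eq_nnnorm, Real.enorm_eq_ofReal (by linarith [hy.2])]
    refine h1.trans ?_
    gcongr
    exact rellichCS hx φ hφm
  -- integrate the key bound
  have hbound : ∫⁻ x, (‖g₀ x‖₊ : ℝ≥0∞) ^ (2:ℝ) ∂halfLineMeasure ≤
      ENNReal.ofReal (16/9) * ∫⁻ y, φ y ^ (2:ℝ) ∂halfLineMeasure := by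
    rw [hμdef]
    calc ∫⁻ x in Set.Ioi (0:ℝ), (‖g₀ x‖₊ : ℝ≥0∞) ^ (2:ℝ)
        ≤ ∫⁻ x in Set.Ioi (0:ℝ), ENNReal.ofReal ((4/3) * x ^ (-(5:ℝ)/2)) * B x :=
          setLIntegral_mono' measurableSet_Ioi key
      _ = ENNReal.ofReal (16/9) * ∫⁻ y in Set.Ioi (0:ℝ), φ y ^ (2:ℝ) :=
          rellichTonelli φ hφm hφt
  -- conclude
  have hfeq : eLpNorm f 2 halfLineMeasure = eLpNorm f₀ 2 halfLineMeasure :=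
    eLpNorm_congr_ae hae
  have h169 : ENNReal.ofReal (16/9) ^ ((1:ℝ)/2) = (4/3 : ℝ≥0∞) := by
    rw [ENNReal.ofReal_rpow_of_pos (by norm_num),
      show ((16:ℝ)/9) = ((4:ℝ)/3)^(2:ℕ) by norm_num,
      ← Real.rpow_natCast ((4:ℝ)/3) 2, ← Real.rpow_mul (by norm_num : (0:ℝ) ≤ 4/3)]
    norm_num
    rw [ENNReal.ofReal_div_of_pos (by norm_num)]; norm_num
  have hnormbound : eLpNorm g₀ 2 halfLineMeasure ≤ (4/3 : ℝ≥0∞) * eLpNorm f 2 halfLineMeasure := by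
    rw [hfeq, eLpNorm_eq_lintegral_rpow_enorm_toReal two_ne_zero ENNReal.ofNat_ne_top,
      eLpNorm_eq_lintegral_rpow_enorm_toReal two_ne_zero ENNReal.ofNat_ne_top]
    simp only [ENNReal.toReal_ofNat]
    calc (∫⁻ x, (‖g₀ x‖₊ : ℝ≥0∞) ^ (2:ℝ) ∂halfLineMeasure) ^ ((1:ℝ)/2)
        ≤ (ENNReal.ofReal (16/9) * ∫⁻ y, φ y ^ (2:ℝ) ∂halfLineMeasure) ^ ((1:ℝ)/2) :=
          ENNReal.rpow_le_rpow hbound (by norm_num)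
      _ = ENNReal.ofReal (16/9) ^ ((1:ℝ)/2) *
          (∫⁻ y, φ y ^ (2:ℝ) ∂halfLineMeasure) ^ ((1:ℝ)/2) :=
          ENNReal.mul_rpow_of_nonneg _ _ (by norm_num)
      _ = (4/3 : ℝ≥0∞) * (∫⁻ y, (‖f₀ y‖₊ : ℝ≥0∞) ^ (2:ℝ) ∂halfLineMeasure) ^ ((1:ℝ)/2) := by
          rw [h169]
  refine ⟨⟨hg₀sm.aestronglyMeasurable, ?_⟩, hnormbound⟩
  refine lt_of_le_of_lt hnormbound ?_
  exact ENNReal.mul_lt_top (ENNReal.div_lt_top (by norm_num) (by norm_num)) hfin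

end
end

section
/- Let α, β ∈ ℂ with α ≠ β. Suppose f ∈ L²(ℝ₊) is differentiable on ℝ₊ with f' locally absolutely continuous, and both −f'' + (α−1/4)x⁻²f and −f'' + (β−1/4)x⁻²f belong to L²(ℝ₊). Then f'' ∈ L²(ℝ₊), x⁻²f ∈ L²(ℝ₊), and lim_{x→0⁺} f(x) = lim_{x→0⁺} f'(x) = 0; that is, f ∈ H₀²(ℝ₊). Conversely, every f ∈ H₀²(ℝ₊) satisfies x⁻²f ∈ L²(ℝ₊) (with ‖x⁻²f‖ ≤ (4/3)‖f''‖), and hence −f'' + (α−1/4)x⁻²f ∈ L²(ℝ₊) for every α ∈ ℂ. -/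
open MeasureTheory Set Filter Topology
open scoped ENNReal

noncomputable section

/- ===== auxiliary lemmas ===== -/

section Aux
open intervalIntegral in
lemma aux_lintegral_rpow_Ioo_eq_top {δ p : ℝ} (hδ : 0 < δ) (hp : p ≤ -1) :
    ∫⁻ x in Ioo (0:ℝ) δ, ENNReal.ofReal (x ^ p) = ∞ := by
  by_contra h
  have hcont : ContinuousOn (fun x : ℝ => x ^ p) (Ioo 0 δ) :=
    fun x hx => (Real.continuousAt_rpow_const x p (Or.inl hx.1.ne')).continuousWithinAt
  have hint : IntegrableOn (fun x : ℝ => x ^ p) (Ioo 0 δ) := by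
    refine ⟨hcont.aestronglyMeasurable measurableSet_Ioo, ?_⟩
    rw [hasFiniteIntegral_iff_ofReal (by
      filter_upwards [ae_restrict_mem measurableSet_Ioo] with x hx
      exact Real.rpow_nonneg hx.1.le p)]
    exact lt_top_iff_ne_top.2 h
  rw [intervalIntegral.integrableOn_Ioo_rpow_iff hδ] at hint
  linarith

lemma aux_not_memLp_of_lower_bound {g : ℝ → ℂ} {δ c q : ℝ} (hδ : 0 < δ) (hc : 0 < c)
    (hq : 1 ≤ 2 * q) (hg : ∀ x ∈ Ioo (0:ℝ) δ, c ≤ x ^ q * ‖g x‖) :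
    ¬ MemLp g 2 (volume.restrict (Set.Ioi 0)) := by
  intro hmem
  have h2 := hmem.2
  rw [eLpNorm_eq_lintegral_rpow_enorm_toReal (by norm_num) (by norm_num)] at h2
  have hfin : ∫⁻ x, (‖g x‖₊ : ℝ≥0∞) ^ (2:ℝ) ∂(volume.restrict (Set.Ioi 0)) ≠ ∞ := by
    intro hcon
    rw [show ENNReal.toReal 2 = (2:ℝ) by norm_num] at h2
    rw [show (∫⁻ x in Ioi (0:ℝ), ‖g x‖ₑ ^ (2:ℝ)) = ∞ from hcon] at h2
    simp at h2
  have hsub : ∫⁻ x in Ioo (0:ℝ) δ, (‖g x‖₊ : ℝ≥0∞) ^ (2:ℝ) ≠ ∞ := by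
    intro hcon
    apply hfin
    rw [eq_top_iff, ← hcon]
    exact lintegral_mono_set Ioo_subset_Ioi_self
  apply hsub
  rw [eq_top_iff]
  calc (⊤ : ℝ≥0∞) = ENNReal.ofReal (c^2) * ∫⁻ x in Ioo (0:ℝ) δ, ENNReal.ofReal (x ^ (-(2*q))) := by
        rw [aux_lintegral_rpow_Ioo_eq_top hδ (by linarith), ENNReal.mul_top]
        simp [ENNReal.ofReal_eq_zero, not_le, pow_pos hc, hc.ne']
    _ = ∫⁻ x in Ioo (0:ℝ) δ, ENNReal.ofReal (c^2) * ENNReal.ofReal (x ^ (-(2*q))) := by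
        rw [lintegral_const_mul' _ _ ENNReal.ofReal_ne_top]
    _ ≤ ∫⁻ x in Ioo (0:ℝ) δ, (‖g x‖₊ : ℝ≥0∞) ^ (2:ℝ) := by
        refine lintegral_mono_ae ?_
        filter_upwards [ae_restrict_mem measurableSet_Ioo] with x hx
        have hx0 : 0 < x := hx.1
        have hxq : (0:ℝ) < x ^ q := Real.rpow_pos_of_pos hx0 q
        have h1 : c * x ^ (-q) ≤ ‖g x‖ := by
          rw [Real.rpow_neg hx0.le]
          rw [mul_inv_le_iff₀ hxq, mul_comm]
          exact hg x hx
        have hsq : c^2 * x^(-(2*q)) = (c * x^(-q))^2 := by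
          rw [mul_pow, ← Real.rpow_natCast (x ^ (-q)) 2, ← Real.rpow_mul hx0.le]
          norm_num
          left; ring_nf
        rw [← enorm_eq_nnnorm, ← ofReal_norm,
          ENNReal.ofReal_rpow_of_nonneg (norm_nonneg _) (by norm_num : (0:ℝ) ≤ 2),
          ← ENNReal.ofReal_mul (by positivity)]
        apply ENNReal.ofReal_le_ofReal
        rw [Real.rpow_two, hsq]
        exact pow_le_pow_left₀ (by positivity) h1 2

lemma aux_tendsto_primitive_zero {g : ℝ → ℂ} (hg : IntegrableOn g (Ioc 0 1) volume) :
    Tendsto (fun x => ∫ t in Ioc (0:ℝ) x, g t) (𝓝[>] 0) (𝓝 0) := by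
  have h1 : IntegrableOn g (Icc 0 1) volume :=
    (integrableOn_Icc_iff_integrableOn_Ioc).2 hg
  have h2 := (intervalIntegral.continuousOn_primitive h1) 0 (left_mem_Icc.2 zero_le_one)
  have h3 : (∫ t in Ioc (0:ℝ) 0, g t) = 0 := by simp
  rw [ContinuousWithinAt, h3] at h2
  have h4 : 𝓝[>] (0:ℝ) = 𝓝[Ioc (0:ℝ) 1] 0 := (nhdsWithin_Ioc_eq_nhdsGT zero_lt_one).symm
  rw [h4]
  exact h2.mono_left (nhdsWithin_mono _ Ioc_subset_Icc_self)

lemma aux_struct {f f'' : ℝ → ℂ}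
    (hac : (∀ x ∈ Set.Ioi (0:ℝ), DifferentiableAt ℝ f x) ∧
      ∀ a ∈ Set.Ioi (0:ℝ), ∀ b ∈ Set.Ioi (0:ℝ), IntervalIntegrable f'' volume a b ∧
        deriv f b - deriv f a = ∫ t in a..b, f'' t)
    (hi : ∀ x, 0 < x → IntegrableOn f'' (Ioc 0 x) volume) :
    ∃ c d : ℂ, Tendsto (deriv f) (𝓝[>] 0) (𝓝 c) ∧ Tendsto f (𝓝[>] 0) (𝓝 d) ∧
      (∀ x, 0 < x → deriv f x = c + ∫ t in Ioc (0:ℝ) x, f'' t) ∧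
      (∀ x, 0 < x → IntegrableOn (deriv f) (Ioc 0 x) volume) ∧
      (∀ x, 0 < x → f x = d + ∫ t in Ioc (0:ℝ) x, deriv f t) ∧
      ContinuousOn (deriv f) (Ioi 0) := by
  obtain ⟨hdiff, hftc⟩ := hac
  have hII : ∀ x, 0 ≤ x → IntervalIntegrable f'' volume 0 x := by
    intro x hx
    rcases eq_or_lt_of_le hx with h | h
    · simp [← h]
    · exact (intervalIntegrable_iff_integrableOn_Ioc_of_le hx).2 (hi x h)
  set c : ℂ := deriv f 1 - ∫ t in (0:ℝ)..1, f'' t with hc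
  have rep1 : ∀ x, 0 < x → deriv f x = c + ∫ t in (0:ℝ)..x, f'' t := by
    intro x hx
    have h1 := (hftc 1 (by norm_num) x hx).2
    have hadd : (∫ t in (0:ℝ)..1, f'' t) + ∫ t in (1:ℝ)..x, f'' t = ∫ t in (0:ℝ)..x, f'' t :=
      intervalIntegral.integral_add_adjacent_intervals (hII 1 zero_le_one)
        (hftc 1 (by norm_num) x hx).1
    rw [hc]
    rw [← hadd] at *
    linear_combination h1
  have rep1' : ∀ x, 0 < x → deriv f x = c + ∫ t in Ioc (0:ℝ) x, f'' t := by
    intro x hx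
    rw [rep1 x hx, intervalIntegral.integral_of_le hx.le]
  have htc : Tendsto (deriv f) (𝓝[>] 0) (𝓝 c) := by
    have := (aux_tendsto_primitive_zero (hi 1 zero_lt_one)).const_add c
    rw [add_zero] at this
    refine this.congr' ?_
    filter_upwards [self_mem_nhdsWithin] with x hx
    exact (rep1' x hx).symm
  have hderivCont : ContinuousOn (deriv f) (Ioi 0) := by
    intro x₀ hx₀
    have hB : (0:ℝ) < x₀ + 1 := by linarith [mem_Ioi.1 hx₀]
    have hP : ContinuousOn (fun x => ∫ t in Ioc (0:ℝ) x, f'' t) (Icc 0 (x₀+1)) :=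
      intervalIntegral.continuousOn_primitive
        ((integrableOn_Icc_iff_integrableOn_Ioc).2 (hi _ hB))
    have h5 : ContinuousWithinAt (fun x => c + ∫ t in Ioc (0:ℝ) x, f'' t) (Icc 0 (x₀+1)) x₀ :=
      (continuousWithinAt_const).add (hP x₀ ⟨(mem_Ioi.1 hx₀).le, by linarith [mem_Ioi.1 hx₀]⟩)
    have h6 : ContinuousWithinAt (fun x => c + ∫ t in Ioc (0:ℝ) x, f'' t) (Ioi 0) x₀ := by
      apply h5.mono_of_mem_nhdsWithin
      apply mem_nhdsWithin_of_mem_nhds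
      exact Icc_mem_nhds (by linarith [mem_Ioi.1 hx₀]) (by linarith)
    exact h6.congr (fun y hy => rep1' y (mem_Ioi.1 hy)) (rep1' x₀ (mem_Ioi.1 hx₀))
  have hderivInt : ∀ x, 0 < x → IntegrableOn (deriv f) (Ioc 0 x) volume := by
    intro x hx
    have hP : ContinuousOn (fun y => c + ∫ t in Ioc (0:ℝ) y, f'' t) (Icc 0 x) :=
      continuousOn_const.add (intervalIntegral.continuousOn_primitive
        ((integrableOn_Icc_iff_integrableOn_Ioc).2 (hi x hx)))
    have : IntegrableOn (fun y => c + ∫ t in Ioc (0:ℝ) y, f'' t) (Ioc 0 x) volume :=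
      (hP.integrableOn_Icc).mono_set Ioc_subset_Icc_self
    exact this.congr_fun (fun y hy => (rep1' y hy.1).symm) measurableSet_Ioc
  have hftc2 : ∀ a, 0 < a → ∀ b, 0 < b → f b - f a = ∫ t in a..b, deriv f t := by
    intro a ha b hb
    refine (intervalIntegral.integral_eq_sub_of_hasDerivAt (fun t ht => ?_) ?_).symm
    · have ht0 : 0 < t := lt_of_lt_of_le (lt_min ha hb) ht.1
      exact (hdiff t ht0).hasDerivAt
    · apply ContinuousOn.intervalIntegrable
      apply hderivCont.mono
      intro t ht
      exact lt_of_lt_of_le (lt_min ha hb) ht.1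
  have hIIderiv : ∀ x, 0 ≤ x → IntervalIntegrable (deriv f) volume 0 x := by
    intro x hx
    rcases eq_or_lt_of_le hx with h | h
    · simp [← h]
    · exact (intervalIntegrable_iff_integrableOn_Ioc_of_le hx).2 (hderivInt x h)
  set d : ℂ := f 1 - ∫ t in (0:ℝ)..1, deriv f t with hd
  have rep2 : ∀ x, 0 < x → f x = d + ∫ t in Ioc (0:ℝ) x, deriv f t := by
    intro x hx
    have h1 := hftc2 1 (by norm_num) x hx
    have hadd : (∫ t in (0:ℝ)..1, deriv f t) + ∫ t in (1:ℝ)..x, deriv f t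
        = ∫ t in (0:ℝ)..x, deriv f t :=
      intervalIntegral.integral_add_adjacent_intervals (hIIderiv 1 zero_le_one)
        ((hIIderiv 1 zero_le_one).symm.trans (hIIderiv x hx.le))
    rw [← intervalIntegral.integral_of_le hx.le, hd, ← hadd] at *
    linear_combination h1
  have htd : Tendsto f (𝓝[>] 0) (𝓝 d) := by
    have := (aux_tendsto_primitive_zero (hderivInt 1 zero_lt_one)).const_add d
    rw [add_zero] at this
    refine this.congr' ?_
    filter_upwards [self_mem_nhdsWithin] with x hx
    exact (rep2 x hx).symm
  exact ⟨c, d, htc, htd, rep1', hderivInt, rep2, hderivCont⟩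

lemma aux_swap_lemma {F G : ℝ → ℝ≥0∞} (hF : Measurable F) (hG : Measurable G) :
    ∫⁻ x in Ioi (0:ℝ), F x * ∫⁻ y in Ioo 0 x, G y
      = ∫⁻ y in Ioi (0:ℝ), G y * ∫⁻ x in Ioi y, F x := by
  set μ := volume.restrict (Ioi (0:ℝ)) with hμ
  set k : ℝ × ℝ → ℝ≥0∞ := fun p => if p.2 < p.1 then F p.1 * G p.2 else 0 with hk
  have hkm : Measurable k := by
    apply Measurable.ite (measurableSet_lt measurable_snd measurable_fst)
    · exact (hF.comp measurable_fst).mul (hG.comp measurable_snd)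
    · exact measurable_const
  have h1 : ∀ x ∈ Ioi (0:ℝ), F x * (∫⁻ y in Ioo 0 x, G y) = ∫⁻ y, k (x, y) ∂μ := by
    intro x hx
    have : (fun y => k (x, y)) = (Iio x).indicator (fun y => F x * G y) := by
      ext y
      by_cases hy : y < x <;> simp [hk, hy, indicator]
    rw [this, lintegral_indicator measurableSet_Iio, hμ,
      Measure.restrict_restrict measurableSet_Iio]
    have : Iio x ∩ Ioi 0 = Ioo 0 x := by ext y; simp [mem_Ioo, and_comm]
    rw [this, lintegral_const_mul _ hG]
  have h2 : ∀ y ∈ Ioi (0:ℝ), (∫⁻ x, k (x, y) ∂μ) = G y * ∫⁻ x in Ioi y, F x := by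
    intro y hy
    have : (fun x => k (x, y)) = (Ioi y).indicator (fun x => F x * G y) := by
      ext x
      by_cases hxy : y < x <;> simp [hk, hxy, indicator]
    rw [this, lintegral_indicator measurableSet_Ioi, hμ,
      Measure.restrict_restrict measurableSet_Ioi]
    have : Ioi y ∩ Ioi 0 = Ioi y := inter_eq_left.2 (fun x hx => show (0:ℝ) < x from lt_trans hy hx)
    rw [this, lintegral_mul_const _ hF, mul_comm]
  calc ∫⁻ x in Ioi (0:ℝ), F x * ∫⁻ y in Ioo 0 x, G y
      = ∫⁻ x, ∫⁻ y, k (x, y) ∂μ ∂μ := by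
        refine setLIntegral_congr_fun measurableSet_Ioi ?_
        exact h1
    _ = ∫⁻ y, ∫⁻ x, k (x, y) ∂μ ∂μ := lintegral_lintegral_swap hkm.aemeasurable
    _ = ∫⁻ y in Ioi (0:ℝ), G y * ∫⁻ x in Ioi y, F x := by
        refine setLIntegral_congr_fun measurableSet_Ioi ?_
        exact h2

lemma aux_cs_step {h : ℝ → ℝ≥0∞} (hm : Measurable h) {σ : ℝ} (hσ : -1 < σ) {x : ℝ} (hx : 0 < x) :
    (∫⁻ y in Ioo (0:ℝ) x, h y) ^ 2
      ≤ ENNReal.ofReal (x ^ (σ+1) / (σ+1))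
        * ∫⁻ y in Ioo (0:ℝ) x, ENNReal.ofReal (y ^ (-σ)) * h y ^ 2 := by
  have hCS := ENNReal.lintegral_mul_le_Lp_mul_Lq (volume.restrict (Ioo (0:ℝ) x))
    ((Real.holderConjugate_iff_eq_conjExponent one_lt_two).2 (by norm_num) :
      Real.HolderConjugate 2 2)
    (f := fun y => ENNReal.ofReal (y ^ (σ/2)))
    (g := fun y => ENNReal.ofReal (y ^ (-(σ/2))) * h y)
    (by fun_prop) (by fun_prop)
  have hcongr : ∫⁻ y in Ioo (0:ℝ) x, h y
      = ∫⁻ y in Ioo (0:ℝ) x,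
          ENNReal.ofReal (y ^ (σ/2)) * (ENNReal.ofReal (y ^ (-(σ/2))) * h y) := by
    refine setLIntegral_congr_fun measurableSet_Ioo (fun y hy => ?_)
    rw [← mul_assoc, ← ENNReal.ofReal_mul (Real.rpow_nonneg hy.1.le _),
      ← Real.rpow_add hy.1, add_neg_cancel, Real.rpow_zero, ENNReal.ofReal_one, one_mul]
  have hsq1 : ∫⁻ y in Ioo (0:ℝ) x, ENNReal.ofReal (y ^ (σ/2)) ^ (2:ℝ)
      = ENNReal.ofReal (x ^ (σ+1) / (σ+1)) := by
    have e1 : ∫⁻ y in Ioo (0:ℝ) x, ENNReal.ofReal (y ^ (σ/2)) ^ (2:ℝ)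
        = ∫⁻ y in Ioo (0:ℝ) x, ENNReal.ofReal (y ^ σ) := by
      refine setLIntegral_congr_fun measurableSet_Ioo (fun y hy => ?_)
      rw [ENNReal.ofReal_rpow_of_nonneg (Real.rpow_nonneg hy.1.le _) (by norm_num),
        ← Real.rpow_mul hy.1.le]
      norm_num
    rw [e1, ← ofReal_integral_eq_lintegral_ofReal
      ((intervalIntegral.integrableOn_Ioo_rpow_iff hx).2 hσ)
      (by filter_upwards [ae_restrict_mem measurableSet_Ioo] with y hy
          exact Real.rpow_nonneg hy.1.le σ)]
    congr 1
    rw [← integral_Ioc_eq_integral_Ioo, ← intervalIntegral.integral_of_le hx.le,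
      integral_rpow (Or.inl hσ), Real.zero_rpow (by linarith), sub_zero]
  have hsq2 : ∫⁻ y in Ioo (0:ℝ) x, (ENNReal.ofReal (y ^ (-(σ/2))) * h y) ^ (2:ℝ)
      = ∫⁻ y in Ioo (0:ℝ) x, ENNReal.ofReal (y ^ (-σ)) * h y ^ 2 := by
    refine setLIntegral_congr_fun measurableSet_Ioo (fun y hy => ?_)
    rw [ENNReal.mul_rpow_of_nonneg _ _ (by norm_num),
      ENNReal.ofReal_rpow_of_nonneg (Real.rpow_nonneg hy.1.le _) (by norm_num),
      ← Real.rpow_mul hy.1.le, ENNReal.rpow_two]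
    norm_num
  rw [hcongr]
  calc (∫⁻ y in Ioo (0:ℝ) x,
        ENNReal.ofReal (y ^ (σ/2)) * (ENNReal.ofReal (y ^ (-(σ/2))) * h y)) ^ 2
      ≤ ((∫⁻ y in Ioo (0:ℝ) x, ENNReal.ofReal (y ^ (σ/2)) ^ (2:ℝ)) ^ (1/(2:ℝ))
        * (∫⁻ y in Ioo (0:ℝ) x,
            (ENNReal.ofReal (y ^ (-(σ/2))) * h y) ^ (2:ℝ)) ^ (1/(2:ℝ))) ^ 2 := by
        exact pow_le_pow_left' hCS 2
    _ = (∫⁻ y in Ioo (0:ℝ) x, ENNReal.ofReal (y ^ (σ/2)) ^ (2:ℝ))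
        * (∫⁻ y in Ioo (0:ℝ) x, (ENNReal.ofReal (y ^ (-(σ/2))) * h y) ^ (2:ℝ)) := by
        rw [mul_pow]
        have e : ∀ A : ℝ≥0∞, (A ^ (1/(2:ℝ)))^2 = A := fun A => by
          rw [← ENNReal.rpow_natCast (A ^ (1/(2:ℝ))) 2, ← ENNReal.rpow_mul]
          norm_num
        rw [e, e]
    _ = ENNReal.ofReal (x ^ (σ+1) / (σ+1))
        * ∫⁻ y in Ioo (0:ℝ) x, ENNReal.ofReal (y ^ (-σ)) * h y ^ 2 := by
        rw [hsq1, hsq2]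

lemma aux_hardy_lintegral {h : ℝ → ℝ≥0∞} (hm : Measurable h) {σ a : ℝ}
    (hσ : -1 < σ) (hs : σ + 2 < a) :
    ∫⁻ x in Ioi (0:ℝ), ENNReal.ofReal (x ^ (-a)) * (∫⁻ y in Ioo 0 x, h y) ^ 2
      ≤ ENNReal.ofReal ((σ+1)⁻¹ * (a-σ-2)⁻¹)
        * ∫⁻ y in Ioi (0:ℝ), ENNReal.ofReal (y ^ (2-a)) * h y ^ 2 := by
  have hσ1 : (0:ℝ) < σ + 1 := by linarith
  have has : (0:ℝ) < a - σ - 2 := by linarith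
  set G : ℝ → ℝ≥0∞ := fun y => ENNReal.ofReal (y ^ (-σ)) * h y ^ 2 with hG
  have hGm : Measurable G := by fun_prop
  set F : ℝ → ℝ≥0∞ := fun x => ENNReal.ofReal (x ^ (σ + 1 - a)) with hF
  have hFm : Measurable F := by fun_prop
  calc ∫⁻ x in Ioi (0:ℝ), ENNReal.ofReal (x ^ (-a)) * (∫⁻ y in Ioo 0 x, h y) ^ 2
      ≤ ∫⁻ x in Ioi (0:ℝ), ENNReal.ofReal ((σ+1)⁻¹) * (F x * ∫⁻ y in Ioo 0 x, G y) := by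
        refine lintegral_mono_ae ?_
        filter_upwards [ae_restrict_mem measurableSet_Ioi] with x hx
        have hx0 : (0:ℝ) < x := hx
        calc ENNReal.ofReal (x ^ (-a)) * (∫⁻ y in Ioo 0 x, h y) ^ 2
            ≤ ENNReal.ofReal (x ^ (-a)) *
              (ENNReal.ofReal (x ^ (σ+1) / (σ+1)) * ∫⁻ y in Ioo (0:ℝ) x, G y) :=
              mul_le_mul_right (aux_cs_step hm hσ hx0) _
          _ = ENNReal.ofReal ((σ+1)⁻¹) * (F x * ∫⁻ y in Ioo 0 x, G y) := by
              rw [← mul_assoc, ← mul_assoc]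
              congr 1
              rw [hF, ← ENNReal.ofReal_mul (Real.rpow_nonneg hx0.le _),
                ← ENNReal.ofReal_mul (by positivity : (0:ℝ) ≤ (σ+1)⁻¹)]
              congr 1
              have hxsum : x ^ (σ+1-a) = x^(σ+1) * x^(-a) := by
                rw [← Real.rpow_add hx0]
                try congr 1
                try ring
              rw [hxsum, div_eq_mul_inv, ← mul_assoc,
                mul_comm (x^(-a) * x^(σ+1)) ((σ+1:ℝ)⁻¹)]
              try rw [mul_comm (x^(-a)) (x^(σ+1))]
    _ = ENNReal.ofReal ((σ+1)⁻¹) * ∫⁻ x in Ioi (0:ℝ), F x * ∫⁻ y in Ioo 0 x, G y :=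
        lintegral_const_mul' _ _ ENNReal.ofReal_ne_top
    _ = ENNReal.ofReal ((σ+1)⁻¹) * ∫⁻ y in Ioi (0:ℝ), G y * ∫⁻ x in Ioi y, F x := by
        rw [aux_swap_lemma hFm hGm]
    _ = ENNReal.ofReal ((σ+1)⁻¹) * ∫⁻ y in Ioi (0:ℝ),
          ENNReal.ofReal ((a-σ-2)⁻¹) * (ENNReal.ofReal (y ^ (2-a)) * h y ^ 2) := by
        congr 1
        refine setLIntegral_congr_fun measurableSet_Ioi (fun y hy => ?_)
        have hy0 : (0:ℝ) < y := hy
        have hFi : ∫⁻ x in Ioi y, F x = ENNReal.ofReal (y ^ (σ + 2 - a) * (a-σ-2)⁻¹) := by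
          rw [hF, ← ofReal_integral_eq_lintegral_ofReal
            (integrableOn_Ioi_rpow_of_lt (by linarith) hy0)
            (by filter_upwards [ae_restrict_mem measurableSet_Ioi] with t ht
                exact Real.rpow_nonneg (lt_trans hy0 ht).le _)]
          congr 1
          rw [integral_Ioi_rpow_of_lt (by linarith) hy0]
          rw [div_eq_mul_inv, neg_mul_comm]
          congr 1
          · ring_nf
          · rw [← inv_neg]
            congr 1
            ring
        rw [hFi, hG]
        rw [ENNReal.ofReal_mul (Real.rpow_nonneg hy0.le _)]
        calc ENNReal.ofReal (y ^ (-σ)) * h y ^ 2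
              * (ENNReal.ofReal (y ^ (σ + 2 - a)) * ENNReal.ofReal (a-σ-2)⁻¹)
            = (ENNReal.ofReal (y ^ (-σ)) * ENNReal.ofReal (y ^ (σ + 2 - a)))
              * ENNReal.ofReal (a-σ-2)⁻¹ * h y ^ 2 := by ring
          _ = ENNReal.ofReal ((a-σ-2)⁻¹) * (ENNReal.ofReal (y ^ (2-a)) * h y ^ 2) := by
              rw [← ENNReal.ofReal_mul (Real.rpow_nonneg hy0.le _), ← Real.rpow_add hy0]
              ring_nf
    _ = ENNReal.ofReal ((σ+1)⁻¹ * (a-σ-2)⁻¹)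
        * ∫⁻ y in Ioi (0:ℝ), ENNReal.ofReal (y ^ (2-a)) * h y ^ 2 := by
        rw [lintegral_const_mul' _ _ ENNReal.ofReal_ne_top, ← mul_assoc,
          ← ENNReal.ofReal_mul (by positivity)]

lemma aux_memLp_integrableOn_Ioc {g : ℝ → ℂ} (hg : MemLp g 2 (volume.restrict (Set.Ioi 0)))
    {x : ℝ} (hx : 0 < x) : IntegrableOn g (Ioc 0 x) volume := by
  have h1 : MemLp g 2 ((volume.restrict (Set.Ioi 0)).restrict (Ioc 0 x)) := hg.restrict _
  rw [Measure.restrict_restrict measurableSet_Ioc] at h1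
  have he : Ioc (0:ℝ) x ∩ Ioi 0 = Ioc 0 x := inter_eq_left.2 (fun y hy => hy.1)
  rw [he] at h1
  have : IsFiniteMeasure (volume.restrict (Ioc (0:ℝ) x)) := by
    constructor
    rw [Measure.restrict_apply_univ]
    exact measure_Ioc_lt_top
  exact h1.integrable (by norm_num)

end Aux

/-- `D(L_α^max) ∩ D(L_β^max) = H₀²((0,∞))` for `α ≠ β`. -/
theorem maximal_domains_intersection (α β : ℂ) (hαβ : α ≠ β) (f f'' : ℝ → ℂ) :
    ((MemLp f 2 halfLineMeasure → AC1 f f'' →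
      MemLp (besselOp α f f'') 2 halfLineMeasure →
      MemLp (besselOp β f f'') 2 halfLineMeasure →
      MemLp f'' 2 halfLineMeasure ∧
      MemLp (fun x : ℝ => ((x : ℂ)^2)⁻¹ * f x) 2 halfLineMeasure ∧
      Tendsto f (𝓝[>] 0) (𝓝 0) ∧ Tendsto (deriv f) (𝓝[>] 0) (𝓝 0))) ∧
    (MemH02With f f'' →
      MemLp (fun x : ℝ => ((x : ℂ)^2)⁻¹ * f x) 2 halfLineMeasure ∧
      eLpNorm (fun x : ℝ => ((x : ℂ)^2)⁻¹ * f x) 2 halfLineMeasure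
        ≤ (4/3 : ℝ≥0∞) * eLpNorm f'' 2 halfLineMeasure ∧
      ∀ γ : ℂ, MemLp (besselOp γ f f'') 2 halfLineMeasure) := by
  constructor
  · intro hf hac hα hβ
    have hQ : MemLp (fun x : ℝ => ((x : ℂ)^2)⁻¹ * f x) 2 halfLineMeasure := by
      have hsub := hα.sub hβ
      have heq : (besselOp α f f'' - besselOp β f f'')
          = fun x : ℝ => (α - β) • (((x : ℂ)^2)⁻¹ * f x) := by
        funext x
        simp only [Pi.sub_apply, besselOp, smul_eq_mul]
        ring
      rw [heq] at hsub
      have h2 := hsub.const_smul (α - β)⁻¹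
      have heq2 : ((α - β)⁻¹ • fun x : ℝ => (α - β) • (((x : ℂ)^2)⁻¹ * f x))
          = fun x : ℝ => ((x : ℂ)^2)⁻¹ * f x := by
        funext x
        simp only [Pi.smul_apply, smul_eq_mul]
        rw [← mul_assoc, inv_mul_cancel₀ (sub_ne_zero.2 hαβ), one_mul]
      rwa [heq2] at h2
    have hf2 : MemLp f'' 2 halfLineMeasure := by
      have h3 := (hQ.const_mul (α - 1/4)).sub hα
      have heq : ((fun x : ℝ => (α - 1/4) * (((x : ℂ)^2)⁻¹ * f x)) - besselOp α f f'') = f'' := by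
        funext x
        simp only [Pi.sub_apply, besselOp]
        ring
      rwa [heq] at h3
    obtain ⟨c, d, htc, htd, rep1, hderivInt, rep2, hderivCont⟩ :=
      aux_struct hac (fun x hx => aux_memLp_integrableOn_Ioc hf2 hx)
    have hnorm : ∀ x : ℝ, 0 < x → ‖((x : ℂ)^2)⁻¹ * f x‖ = (x^2)⁻¹ * ‖f x‖ := by
      intro x hx
      rw [norm_mul, norm_inv, norm_pow, Complex.norm_real, Real.norm_of_nonneg hx.le]
    have hd0 : d = 0 := by
      by_contra hdne
      have hpos : 0 < ‖d‖/2 := half_pos (norm_pos_iff.mpr hdne)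
      have hev : ∀ᶠ x in 𝓝[>] (0:ℝ), dist (f x) d < ‖d‖/2 :=
        Metric.tendsto_nhds.mp htd _ hpos
      obtain ⟨δ, hδpos, hδ⟩ := Metric.mem_nhdsWithin_iff.1 hev
      refine absurd hQ (aux_not_memLp_of_lower_bound hδpos hpos
        (q := 2) (by norm_num) ?_)
      intro x hx
      have hxball : x ∈ Metric.ball (0:ℝ) δ := by
        rw [Metric.mem_ball, Real.dist_eq, sub_zero, abs_of_pos hx.1]
        exact hx.2
      have hb : dist (f x) d < ‖d‖/2 := hδ ⟨hxball, hx.1⟩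
      rw [dist_eq_norm] at hb
      have hfx : ‖d‖/2 ≤ ‖f x‖ := by
        have h1 := norm_sub_norm_le d (f x)
        have h2 : ‖d - f x‖ = ‖f x - d‖ := norm_sub_rev _ _
        linarith
      rw [hnorm x hx.1, Real.rpow_two]
      have hx2 : (0:ℝ) < x^2 := pow_pos hx.1 2
      calc ‖d‖/2 ≤ ‖f x‖ := hfx
        _ = x^2 * ((x^2)⁻¹ * ‖f x‖) := by rw [← mul_assoc, mul_inv_cancel₀ hx2.ne', one_mul]
    have hc0 : c = 0 := by
      by_contra hcne
      have hpos : 0 < ‖c‖/2 := half_pos (norm_pos_iff.mpr hcne)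
      have hev : ∀ᶠ t in 𝓝[>] (0:ℝ), dist (deriv f t) c < ‖c‖/2 :=
        Metric.tendsto_nhds.mp htc _ hpos
      obtain ⟨δ, hδpos, hδ⟩ := Metric.mem_nhdsWithin_iff.1 hev
      refine absurd hQ (aux_not_memLp_of_lower_bound hδpos hpos
        (q := 1) (by norm_num) ?_)
      intro x hx
      have hx0 : 0 < x := hx.1
      have hrep : f x = ∫ t in Ioc (0:ℝ) x, deriv f t := by
        rw [rep2 x hx0, hd0, zero_add]
      have hconst : IntegrableOn (fun _ : ℝ => c) (Ioc 0 x) volume :=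
        integrableOn_const measure_Ioc_lt_top.ne
      have hsplit : f x - x • c = ∫ t in Ioc (0:ℝ) x, (deriv f t - c) := by
        rw [integral_sub (hderivInt x hx0) hconst, ← hrep, integral_const,
          measureReal_restrict_apply_univ, Real.volume_real_Ioc_of_le hx0.le, sub_zero]
      have hbound : ‖∫ t in Ioc (0:ℝ) x, (deriv f t - c)‖ ≤ ‖c‖/2 * x := by
        have hle := norm_setIntegral_le_of_norm_le_const (μ := volume)
          (s := Ioc (0:ℝ) x) (f := fun t => deriv f t - c) (C := ‖c‖/2)
          measure_Ioc_lt_top ?_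
        · rw [Real.volume_real_Ioc_of_le hx0.le, sub_zero] at hle
          exact hle
        · intro t ht
          have htball : t ∈ Metric.ball (0:ℝ) δ := by
            rw [Metric.mem_ball, Real.dist_eq, sub_zero, abs_of_pos ht.1]
            exact lt_of_le_of_lt ht.2 hx.2
          have h4 : dist (deriv f t) c < ‖c‖/2 := hδ ⟨htball, ht.1⟩
          rw [dist_eq_norm] at h4
          exact h4.le
      have hfx : ‖c‖/2 * x ≤ ‖f x‖ := by
        have h1 : ‖x • c‖ - ‖f x‖ ≤ ‖x • c - f x‖ := norm_sub_norm_le _ _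
        have h2 : ‖x • c - f x‖ = ‖f x - x • c‖ := norm_sub_rev _ _
        have h3 : ‖x • c‖ = x * ‖c‖ := by
          rw [norm_smul, Real.norm_of_nonneg hx0.le]
        rw [hsplit] at h2
        rw [h2, h3] at h1
        linarith [hbound]
      rw [hnorm x hx0, Real.rpow_one]
      have hx2 : (0:ℝ) < x^2 := pow_pos hx0 2
      have he : x * ((x^2)⁻¹ * ‖f x‖) = ‖f x‖ / x := by
        field_simp
      rw [he, le_div_iff₀ hx0]
      exact hfx
    rw [hd0] at htd
    rw [hc0] at htc
    exact ⟨hf2, hQ, htd, htc⟩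
  · intro hmem
    obtain ⟨hf, hac, hf'', htd0, htc0⟩ := hmem
    obtain ⟨c, d, htc, htd, rep1, hderivInt, rep2, hderivCont⟩ :=
      aux_struct hac (fun x hx => aux_memLp_integrableOn_Ioc hf'' hx)
    have hc0 : c = 0 := tendsto_nhds_unique htc htc0
    have hd0 : d = 0 := tendsto_nhds_unique htd htd0
    -- measurable ENNReal versions
    have hH2 : AEMeasurable (fun y => (‖f'' y‖₊ : ℝ≥0∞)) (volume.restrict (Set.Ioi 0)) :=
      hf''.1.enorm
    set H2 : ℝ → ℝ≥0∞ := hH2.mk _ with hH2def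
    have hH2m : Measurable H2 := hH2.measurable_mk
    have hH2ae : (fun y => (‖f'' y‖₊ : ℝ≥0∞)) =ᵐ[volume.restrict (Set.Ioi 0)] H2 :=
      hH2.ae_eq_mk
    have hH1 : AEMeasurable (fun y => (‖deriv f y‖₊ : ℝ≥0∞)) (volume.restrict (Set.Ioi 0)) :=
      ((hderivCont.aestronglyMeasurable measurableSet_Ioi).enorm)
    set H1 : ℝ → ℝ≥0∞ := hH1.mk _ with hH1def
    have hH1m : Measurable H1 := hH1.measurable_mk
    have hH1ae : (fun y => (‖deriv f y‖₊ : ℝ≥0∞)) =ᵐ[volume.restrict (Set.Ioi 0)] H1 :=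
      hH1.ae_eq_mk
    -- pointwise bounds
    have key1 : ∀ x : ℝ, 0 < x → (‖deriv f x‖₊ : ℝ≥0∞) ≤ ∫⁻ y in Ioo 0 x, H2 y := by
      intro x hx
      have hrep : deriv f x = ∫ t in Ioc (0:ℝ) x, f'' t := by
        rw [rep1 x hx, hc0, zero_add]
      calc (‖deriv f x‖₊ : ℝ≥0∞) = ‖∫ t in Ioc (0:ℝ) x, f'' t‖₊ := by rw [hrep]
        _ ≤ ∫⁻ t in Ioc (0:ℝ) x, ‖f'' t‖₊ := enorm_integral_le_lintegral_enorm _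
        _ = ∫⁻ t in Ioo (0:ℝ) x, ‖f'' t‖₊ := by
            rw [← Measure.restrict_congr_set Ioo_ae_eq_Ioc]
        _ = ∫⁻ y in Ioo (0:ℝ) x, H2 y := lintegral_congr_ae
            (ae_restrict_of_ae_restrict_of_subset Ioo_subset_Ioi_self hH2ae)
    have key2 : ∀ x : ℝ, 0 < x → (‖f x‖₊ : ℝ≥0∞) ≤ ∫⁻ y in Ioo 0 x, H1 y := by
      intro x hx
      have hrep : f x = ∫ t in Ioc (0:ℝ) x, deriv f t := by
        rw [rep2 x hx, hd0, zero_add]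
      calc (‖f x‖₊ : ℝ≥0∞) = ‖∫ t in Ioc (0:ℝ) x, deriv f t‖₊ := by rw [hrep]
        _ ≤ ∫⁻ t in Ioc (0:ℝ) x, ‖deriv f t‖₊ := enorm_integral_le_lintegral_enorm _
        _ = ∫⁻ t in Ioo (0:ℝ) x, ‖deriv f t‖₊ := by
            rw [← Measure.restrict_congr_set Ioo_ae_eq_Ioc]
        _ = ∫⁻ y in Ioo (0:ℝ) x, H1 y := lintegral_congr_ae
            (ae_restrict_of_ae_restrict_of_subset Ioo_subset_Ioi_self hH1ae)
    -- Hardy chains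
    have T1 : ∫⁻ x in Ioi (0:ℝ), ENNReal.ofReal (x ^ (-(2:ℝ))) * H1 x ^ 2
        ≤ ENNReal.ofReal 4 * ∫⁻ y in Ioi (0:ℝ), H2 y ^ 2 := by
      calc ∫⁻ x in Ioi (0:ℝ), ENNReal.ofReal (x ^ (-(2:ℝ))) * H1 x ^ 2
          ≤ ∫⁻ x in Ioi (0:ℝ), ENNReal.ofReal (x ^ (-(2:ℝ))) * (∫⁻ y in Ioo 0 x, H2 y) ^ 2 := by
            refine lintegral_mono_ae ?_
            filter_upwards [ae_restrict_mem measurableSet_Ioi, hH1ae] with x hx hx2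
            rw [← hx2]
            exact mul_le_mul_right (pow_le_pow_left' (key1 x hx) 2) _
        _ ≤ ENNReal.ofReal (((-1/2:ℝ)+1)⁻¹ * ((2:ℝ)-(-1/2)-2)⁻¹)
            * ∫⁻ y in Ioi (0:ℝ), ENNReal.ofReal (y ^ ((2:ℝ)-2)) * H2 y ^ 2 :=
            aux_hardy_lintegral hH2m (σ := -1/2) (a := 2) (by norm_num) (by norm_num)
        _ = ENNReal.ofReal 4 * ∫⁻ y in Ioi (0:ℝ), H2 y ^ 2 := by
            congr 1
            · norm_num
            · refine setLIntegral_congr_fun measurableSet_Ioi (fun y hy => ?_)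
              norm_num
    have T2 : ∫⁻ x in Ioi (0:ℝ), ENNReal.ofReal (x ^ (-(4:ℝ))) * (‖f x‖₊ : ℝ≥0∞) ^ 2
        ≤ ENNReal.ofReal (4/9) * ∫⁻ y in Ioi (0:ℝ), ENNReal.ofReal (y ^ (-(2:ℝ))) * H1 y ^ 2 := by
      calc ∫⁻ x in Ioi (0:ℝ), ENNReal.ofReal (x ^ (-(4:ℝ))) * (‖f x‖₊ : ℝ≥0∞) ^ 2
          ≤ ∫⁻ x in Ioi (0:ℝ), ENNReal.ofReal (x ^ (-(4:ℝ))) * (∫⁻ y in Ioo 0 x, H1 y) ^ 2 := by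
            refine lintegral_mono_ae ?_
            filter_upwards [ae_restrict_mem measurableSet_Ioi] with x hx
            exact mul_le_mul_right (pow_le_pow_left' (key2 x hx) 2) _
        _ ≤ ENNReal.ofReal (((1/2:ℝ)+1)⁻¹ * ((4:ℝ)-(1/2)-2)⁻¹)
            * ∫⁻ y in Ioi (0:ℝ), ENNReal.ofReal (y ^ ((2:ℝ)-4)) * H1 y ^ 2 :=
            aux_hardy_lintegral hH1m (σ := 1/2) (a := 4) (by norm_num) (by norm_num)
        _ = ENNReal.ofReal (4/9) * ∫⁻ y in Ioi (0:ℝ), ENNReal.ofReal (y ^ (-(2:ℝ))) * H1 y ^ 2 := by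
            norm_num
    -- identify the L² norms
    have hA : ∫⁻ y in Ioi (0:ℝ), H2 y ^ 2
        = ∫⁻ y, ((‖f'' y‖₊ : ℝ≥0∞)) ^ (2:ℝ) ∂halfLineMeasure := by
      refine lintegral_congr_ae ?_
      filter_upwards [hH2ae] with y hy
      rw [← hy, ENNReal.rpow_two]
    have hwf : ∫⁻ x, ((‖((x:ℂ)^2)⁻¹ * f x‖₊ : ℝ≥0∞)) ^ (2:ℝ) ∂halfLineMeasure
        = ∫⁻ x in Ioi (0:ℝ), ENNReal.ofReal (x ^ (-(4:ℝ))) * (‖f x‖₊ : ℝ≥0∞) ^ 2 := by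
      refine setLIntegral_congr_fun measurableSet_Ioi (fun x hx => ?_)
      have hx0 : (0:ℝ) < x := hx
      have hx2 : (0:ℝ) < x^2 := pow_pos hx0 2
      have hn : ‖((x:ℂ)^2)⁻¹ * f x‖ = (x^2)⁻¹ * ‖f x‖ := by
        rw [norm_mul, norm_inv, norm_pow, Complex.norm_real, Real.norm_of_nonneg hx0.le]
      rw [ENNReal.rpow_two, ← enorm_eq_nnnorm, ← ofReal_norm, ← enorm_eq_nnnorm, ← ofReal_norm, hn,
        ← ENNReal.ofReal_pow (by positivity), ← ENNReal.ofReal_pow (norm_nonneg _),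
        ← ENNReal.ofReal_mul (by positivity : (0:ℝ) ≤ x ^ (-(4:ℝ)))]
      congr 1
      rw [mul_pow]
      congr 1
      rw [Real.rpow_neg hx0.le, show (4:ℝ) = ((4:ℕ):ℝ) by norm_num, Real.rpow_natCast,
        inv_pow]
      congr 1
      ring
    -- the eLpNorm inequality
    have hle2 : ∫⁻ x, ((‖((x:ℂ)^2)⁻¹ * f x‖₊ : ℝ≥0∞)) ^ (2:ℝ) ∂halfLineMeasure
        ≤ ENNReal.ofReal (16/9) * ∫⁻ y, ((‖f'' y‖₊ : ℝ≥0∞)) ^ (2:ℝ) ∂halfLineMeasure := by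
      rw [hwf, ← hA]
      calc ∫⁻ x in Ioi (0:ℝ), ENNReal.ofReal (x ^ (-(4:ℝ))) * (‖f x‖₊ : ℝ≥0∞) ^ 2
          ≤ ENNReal.ofReal (4/9) * ∫⁻ y in Ioi (0:ℝ), ENNReal.ofReal (y ^ (-(2:ℝ))) * H1 y ^ 2 := T2
        _ ≤ ENNReal.ofReal (4/9) * (ENNReal.ofReal 4 * ∫⁻ y in Ioi (0:ℝ), H2 y ^ 2) :=
            mul_le_mul_right T1 _
        _ = ENNReal.ofReal (16/9) * ∫⁻ y in Ioi (0:ℝ), H2 y ^ 2 := by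
            rw [← mul_assoc, ← ENNReal.ofReal_mul (by norm_num)]
            norm_num
    have hbound : eLpNorm (fun x : ℝ => ((x : ℂ)^2)⁻¹ * f x) 2 halfLineMeasure
        ≤ (4/3 : ℝ≥0∞) * eLpNorm f'' 2 halfLineMeasure := by
      rw [eLpNorm_eq_lintegral_rpow_enorm_toReal (by norm_num) (by norm_num),
        eLpNorm_eq_lintegral_rpow_enorm_toReal (by norm_num) (by norm_num)]
      rw [show ENNReal.toReal 2 = (2:ℝ) by norm_num]
      calc (∫⁻ x, ((‖((x:ℂ)^2)⁻¹ * f x‖₊ : ℝ≥0∞)) ^ (2:ℝ) ∂halfLineMeasure) ^ (1/(2:ℝ))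
          ≤ (ENNReal.ofReal (16/9)
              * ∫⁻ y, ((‖f'' y‖₊ : ℝ≥0∞)) ^ (2:ℝ) ∂halfLineMeasure) ^ (1/(2:ℝ)) :=
            ENNReal.rpow_le_rpow hle2 (by norm_num)
        _ = (4/3 : ℝ≥0∞)
            * (∫⁻ y, ((‖f'' y‖₊ : ℝ≥0∞)) ^ (2:ℝ) ∂halfLineMeasure) ^ (1/(2:ℝ)) := by
            rw [ENNReal.mul_rpow_of_nonneg _ _ (by norm_num)]
            congr 1
            rw [ENNReal.ofReal_rpow_of_nonneg (by norm_num) (by norm_num)]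
            rw [show ((16:ℝ)/9) ^ ((1:ℝ)/2) = 4/3 by
              rw [show (16/9:ℝ) = (4/3)^2 by norm_num, ← Real.rpow_natCast (4/3:ℝ) 2,
                ← Real.rpow_mul (by norm_num)]
              norm_num]
            rw [ENNReal.ofReal_div_of_pos (by norm_num)]
            norm_num
    -- membership
    have hfc : ContinuousOn f (Ioi 0) := fun x hx =>
      (hac.1 x hx).continuousAt.continuousWithinAt
    have hwc : ContinuousOn (fun x : ℝ => ((x:ℂ)^2)⁻¹) (Ioi 0) := by
      apply ContinuousOn.inv₀
      · exact (Complex.continuous_ofReal.continuousOn.pow 2)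
      · intro x hx
        exact pow_ne_zero 2 (Complex.ofReal_ne_zero.2 (ne_of_gt hx))
    have hQmem : MemLp (fun x : ℝ => ((x : ℂ)^2)⁻¹ * f x) 2 halfLineMeasure := by
      refine ⟨(hwc.mul hfc).aestronglyMeasurable measurableSet_Ioi, ?_⟩
      calc eLpNorm (fun x : ℝ => ((x : ℂ)^2)⁻¹ * f x) 2 halfLineMeasure
          ≤ (4/3 : ℝ≥0∞) * eLpNorm f'' 2 halfLineMeasure := hbound
        _ < ∞ := ENNReal.mul_lt_top (ENNReal.div_lt_top (by norm_num) (by norm_num)) hf''.2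
    refine ⟨hQmem, hbound, fun γ => ?_⟩
    have h1 := (hf''.neg).add (hQmem.const_mul (γ - 1/4))
    have heq : ((-f'') + fun x : ℝ => (γ - 1/4) * (((x:ℂ)^2)⁻¹ * f x)) = besselOp γ f f'' := by
      funext x
      simp only [Pi.add_apply, Pi.neg_apply, besselOp]
      ring
    rwa [heq] at h1

end
end

section
/- Let α₁, α₂ ∈ ℂ with α₁ ≠ α₂, |Re √α₁| < 1 and |Re √α₂| < 1. Then the domains of the maximal Bessel operators differ: with m₁ a square root of α₁ satisfying |Re m₁| < 1 and ξ ∈ C_c^∞[0,∞) equal to 1 near 0, the function f(x) = x^{1/2+m₁} ξ(x) belongs to L²(ℝ₊), is AC¹, satisfies −f'' + (α₁−1/4)x⁻²f ∈ L²(ℝ₊), but −f'' + (α₂−1/4)x⁻²f ∉ L²(ℝ₊). -/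
open MeasureTheory Set Filter Topology
open scoped ENNReal

noncomputable section

lemma bessel_hasDerivAt_cpow_real (d : ℂ) {x : ℝ} (hx : 0 < x) :
    HasDerivAt (fun y : ℝ => (y : ℂ) ^ d) (d * (x : ℂ) ^ (d - 1)) x := by
  have h := Complex.hasStrictDerivAt_cpow_const (x := (x : ℂ)) (c := d)
    (by simp [Complex.mem_slitPlane_iff, hx])
  exact h.hasDerivAt.comp_ofReal

lemma bessel_continuousOn_cpow_real (d : ℂ) :
    ContinuousOn (fun y : ℝ => (y : ℂ) ^ d) (Set.Ioi 0) := fun _ hx =>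
  ((bessel_hasDerivAt_cpow_real d hx).continuousAt).continuousWithinAt

lemma bessel_deriv_eq_zero_of_eq_const {g : ℝ → ℂ} {U : Set ℝ} (hU : IsOpen U) (k : ℂ)
    (h : ∀ y ∈ U, g y = k) {x : ℝ} (hx : x ∈ U) : deriv g x = 0 := by
  have he : g =ᶠ[𝓝 x] fun _ => k := Filter.eventually_of_mem (hU.mem_nhds hx) h
  rw [he.deriv_eq, deriv_const]

lemma bessel_memLp_of_aux {g : ℝ → ℂ} (hg : ContinuousOn g (Set.Ioi 0))
    {C s R : ℝ} (hs : -1 < s) (hR : 0 < R)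
    (hbound : ∀ x : ℝ, 0 < x → ‖g x‖ ^ 2 ≤ C * x ^ s)
    (hzero : ∀ x : ℝ, R ≤ x → g x = 0) :
    MemLp g 2 halfLineMeasure := by
  have hmeas : AEStronglyMeasurable g halfLineMeasure :=
    hg.aestronglyMeasurable measurableSet_Ioi
  rw [memLp_two_iff_integrable_sq_norm hmeas]
  show IntegrableOn (fun x => ‖g x‖ ^ 2) (Set.Ioi 0) volume
  have hsub : Set.Ioi (0:ℝ) ⊆ Set.Ioo 0 R ∪ Set.Ici R := by
    intro x hx
    rcases lt_or_ge x R with h | h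
    · exact Or.inl ⟨hx, h⟩
    · exact Or.inr h
  refine MeasureTheory.IntegrableOn.mono_set (MeasureTheory.IntegrableOn.union ?_ ?_) hsub
  · have hdom : IntegrableOn (fun x : ℝ => C * x ^ s) (Set.Ioo 0 R) :=
      ((intervalIntegral.integrableOn_Ioo_rpow_iff hR).2 hs).const_mul C
    refine hdom.mono' ?_ ?_
    · exact ((hg.mono Set.Ioo_subset_Ioi_self).norm.pow 2).aestronglyMeasurable
        measurableSet_Ioo
    · refine (ae_restrict_iff' measurableSet_Ioo).2 (Filter.Eventually.of_forall ?_)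
      intro x hx
      rw [Real.norm_eq_abs, abs_of_nonneg (by positivity)]
      exact hbound x hx.1
  · refine (integrableOn_congr_fun (g := fun _ => (0:ℝ)) ?_ measurableSet_Ici).2
      (integrableOn_zero)
    intro x hx
    simp [hzero x hx]


/-- the maximal domains for `α₁ ≠ α₂` (both with `|Re √αᵢ| < 1`) differ. -/
theorem maximal_domains_differ (α₁ α₂ m₁ : ℂ) (h12 : α₁ ≠ α₂)
    (hm₁ : m₁^2 = α₁ ∧ |m₁.re| < 1) (hm₂ : ∃ m₂ : ℂ, m₂^2 = α₂ ∧ |m₂.re| < 1)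
    (ξ : ℝ → ℂ) (hξ : IsCutoff ξ) :
    MemLp (fun x : ℝ => (x : ℂ) ^ ((1:ℂ)/2 + m₁) * ξ x) 2 halfLineMeasure ∧
    ∃ f'' : ℝ → ℂ, AC1 (fun x : ℝ => (x : ℂ) ^ ((1:ℂ)/2 + m₁) * ξ x) f'' ∧
      MemLp (besselOp α₁ (fun x : ℝ => (x : ℂ) ^ ((1:ℂ)/2 + m₁) * ξ x) f'')
        2 halfLineMeasure ∧
      ¬ MemLp (besselOp α₂ (fun x : ℝ => (x : ℂ) ^ ((1:ℂ)/2 + m₁) * ξ x) f'')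
        2 halfLineMeasure := by
  obtain ⟨hm, hmre⟩ := hm₁
  obtain ⟨hξsm, hξcs, ε₀, hε₀, hξ1⟩ := hξ
  set c : ℂ := (1:ℂ)/2 + m₁ with hc
  set f : ℝ → ℂ := fun x : ℝ => (x : ℂ) ^ c * ξ x with hfdef
  set F2 : ℝ → ℂ := fun x : ℝ =>
    ((c * ((c - 1) * (x : ℂ) ^ (c - 1 - 1))) * ξ x + (c * (x : ℂ) ^ (c - 1)) * deriv ξ x) +
    ((c * (x : ℂ) ^ (c - 1)) * deriv ξ x + (x : ℂ) ^ c * deriv (deriv ξ) x) with hF2def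
  set F1 : ℝ → ℂ := fun x : ℝ =>
    (c * (x : ℂ) ^ (c - 1)) * ξ x + (x : ℂ) ^ c * deriv ξ x with hF1def
  -- basic regularity of ξ
  have hξsm' : ContDiff ℝ ((⊤:ℕ∞) : WithTop ℕ∞) ξ := hξsm.of_le (by simp)
  have hξcont : Continuous ξ := hξsm.continuous
  have hξd1 : Differentiable ℝ ξ := hξsm'.differentiable (by simp)
  have hξdsm : ContDiff ℝ ((⊤:ℕ∞) : WithTop ℕ∞) (deriv ξ) :=
    (contDiff_infty_iff_deriv.mp hξsm').2
  have hξd2 : Differentiable ℝ (deriv ξ) := hξdsm.differentiable (by simp)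
  have hξddc : Continuous (deriv (deriv ξ)) :=
    hξdsm.continuous_deriv (by exact_mod_cast le_top)
  -- vanishing of derivatives near 0
  have hder0 : ∀ x ∈ Set.Iio ε₀, deriv ξ x = 0 := fun x hx =>
    bessel_deriv_eq_zero_of_eq_const isOpen_Iio 1 (fun y hy => hξ1 y hy) hx
  have hdd0 : ∀ x ∈ Set.Iio ε₀, deriv (deriv ξ) x = 0 := fun x hx =>
    bessel_deriv_eq_zero_of_eq_const isOpen_Iio 0 hder0 hx
  -- vanishing for large x
  obtain ⟨R₀, hR₀⟩ := hξcs.bddAbove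
  set R : ℝ := max R₀ 0 + 1 with hRdef
  have hRpos : 0 < R := by positivity
  have hU : ∀ y ∈ Set.Ioi (max R₀ 0), ξ y = 0 := by
    intro y hy
    apply image_eq_zero_of_notMem_tsupport
    intro hmem
    have := hR₀ hmem
    simp only [Set.mem_Ioi] at hy
    have : y ≤ max R₀ 0 := le_trans this (le_max_left _ _)
    linarith
  have hderU : ∀ y ∈ Set.Ioi (max R₀ 0), deriv ξ y = 0 := fun y hy =>
    bessel_deriv_eq_zero_of_eq_const isOpen_Ioi 0 hU hy
  have hddU : ∀ y ∈ Set.Ioi (max R₀ 0), deriv (deriv ξ) y = 0 := fun y hy =>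
    bessel_deriv_eq_zero_of_eq_const isOpen_Ioi 0 hderU hy
  have hmemU : ∀ x : ℝ, R ≤ x → x ∈ Set.Ioi (max R₀ 0) := by
    intro x hx
    simp only [Set.mem_Ioi]
    have : max R₀ 0 + 1 ≤ x := by rw [← hRdef]; exact hx
    linarith
  have hfzero : ∀ x : ℝ, R ≤ x → f x = 0 := by
    intro x hx
    simp [hfdef, hU x (hmemU x hx)]
  have hbzero : ∀ (β : ℂ) (x : ℝ), R ≤ x → besselOp β f F2 x = 0 := by
    intro β x hx
    have h1 := hU x (hmemU x hx)
    have h2 := hderU x (hmemU x hx)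
    have h3 := hddU x (hmemU x hx)
    simp [besselOp, hfdef, hF2def, h1, h2, h3]
  -- derivatives of f
  have hF1 : ∀ x : ℝ, 0 < x → HasDerivAt f (F1 x) x := fun x hx =>
    (bessel_hasDerivAt_cpow_real c hx).mul (hξd1 x).hasDerivAt
  have hF2 : ∀ x : ℝ, 0 < x → HasDerivAt F1 (F2 x) x := fun x hx =>
    (((bessel_hasDerivAt_cpow_real (c - 1) hx).const_mul c).mul (hξd1 x).hasDerivAt).add
      ((bessel_hasDerivAt_cpow_real c hx).mul (hξd2 x).hasDerivAt)
  -- continuity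
  have hfcont : ContinuousOn f (Set.Ioi 0) :=
    (bessel_continuousOn_cpow_real c).mul hξcont.continuousOn
  have hF2cont : ContinuousOn F2 (Set.Ioi 0) := by
    apply ContinuousOn.add
    · exact ((continuousOn_const.mul (continuousOn_const.mul
        (bessel_continuousOn_cpow_real (c - 1 - 1)))).mul hξcont.continuousOn).add
        ((continuousOn_const.mul (bessel_continuousOn_cpow_real (c - 1))).mul
          (hξdsm.continuous.continuousOn))
    · exact ((continuousOn_const.mul (bessel_continuousOn_cpow_real (c - 1))).mul
        (hξdsm.continuous.continuousOn)).add
        ((bessel_continuousOn_cpow_real c).mul hξddc.continuousOn)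
  have hbcont : ∀ β : ℂ, ContinuousOn (besselOp β f F2) (Set.Ioi 0) := by
    intro β
    apply ContinuousOn.add
    · exact hF2cont.neg
    · apply ContinuousOn.mul _ hfcont
      apply ContinuousOn.mul continuousOn_const
      apply ContinuousOn.inv₀
      · exact ((Complex.continuous_ofReal.pow 2)).continuousOn
      · intro x hx
        exact pow_ne_zero 2 (Complex.ofReal_ne_zero.mpr (ne_of_gt hx))
  -- the key pointwise identity on (0, ε₀)
  have hcc : c * (c - 1) = α₁ - 1/4 := by rw [hc, ← hm]; ring
  have hkey : ∀ (β : ℂ) (x : ℝ), 0 < x → x < ε₀ →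
      besselOp β f F2 x = (β - α₁) * (x : ℂ) ^ (c - 2) := by
    intro β x hx hxε
    have hx0 : (x : ℂ) ≠ 0 := Complex.ofReal_ne_zero.mpr hx.ne'
    have h1 : ξ x = 1 := hξ1 x hxε
    have h2 : deriv ξ x = 0 := hder0 x hxε
    have h3 : deriv (deriv ξ) x = 0 := hdd0 x hxε
    have hpow : ((x : ℂ) ^ 2)⁻¹ * (x : ℂ) ^ c = (x : ℂ) ^ (c - 2) := by
      have h2c : (x : ℂ) ^ ((2:ℕ) : ℂ) = (x : ℂ) ^ (2 : ℕ) := Complex.cpow_natCast _ 2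
      rw [Complex.cpow_sub _ _ hx0]
      rw [show (2:ℂ) = ((2:ℕ) : ℂ) by norm_num, h2c]
      field_simp
    have he : c - 1 - 1 = c - 2 := by ring
    simp only [besselOp, hfdef, hF2def, h1, h2, h3, mul_one, mul_zero, add_zero, zero_add, he]
    linear_combination (β - 1/4) * hpow - (x : ℂ) ^ (c - 2) * hcc
  -- real part facts
  have hcre : c.re = 1/2 + m₁.re := by rw [hc]; simp
  obtain ⟨ht1, ht2⟩ := abs_lt.mp hmre
  -- 1. f ∈ L²
  obtain ⟨M, hM⟩ := hξcont.bounded_above_of_compact_support hξcs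
  have hmemf : MemLp f 2 halfLineMeasure := by
    refine bessel_memLp_of_aux hfcont (C := M ^ 2) (s := c.re * 2) ?_ hRpos ?_ hfzero
    · rw [hcre]; linarith
    · intro x hx
      have h1 : ‖(x : ℂ) ^ c‖ = x ^ c.re := by
        rw [Complex.norm_cpow_eq_rpow_re_of_pos hx]
      have h2 : (x ^ c.re) ^ 2 = x ^ (c.re * 2) := by
        rw [← Real.rpow_natCast (x ^ c.re) 2, ← Real.rpow_mul hx.le]
        norm_num
      calc ‖f x‖ ^ 2 = (x ^ c.re) ^ 2 * ‖ξ x‖ ^ 2 := by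
            rw [hfdef]; simp only [norm_mul, h1]; ring
        _ ≤ (x ^ c.re) ^ 2 * M ^ 2 := by
            have hb : ‖ξ x‖ ^ 2 ≤ M ^ 2 := pow_le_pow_left₀ (norm_nonneg _) (hM x) 2
            exact mul_le_mul_of_nonneg_left hb (by positivity)
        _ = M ^ 2 * x ^ (c.re * 2) := by rw [h2]; ring
  refine ⟨hmemf, F2, ?_, ?_, ?_⟩
  -- 2. AC1
  · constructor
    · exact fun x hx => (hF1 x hx).differentiableAt
    · intro a ha b hb
      simp only [Set.mem_Ioi] at ha hb
      have hsub : Set.uIcc a b ⊆ Set.Ioi 0 := fun x hx =>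
        lt_of_lt_of_le (lt_min ha hb) hx.1
      have hInt : IntervalIntegrable F2 volume a b :=
        (hF2cont.mono hsub).intervalIntegrable
      refine ⟨hInt, ?_⟩
      have hftc := intervalIntegral.integral_eq_sub_of_hasDerivAt
        (fun x hx => hF2 x (hsub hx)) hInt
      rw [hftc, (hF1 b hb).deriv, (hF1 a ha).deriv]
  -- 3. besselOp α₁ ∈ L²
  · obtain ⟨C₀, hC₀⟩ := (isCompact_Icc (a := ε₀/2) (b := R)).exists_bound_of_continuousOn
      ((hbcont α₁).mono (fun x hx => lt_of_lt_of_le (by linarith) hx.1))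
    refine bessel_memLp_of_aux (hbcont α₁) (C := (max C₀ 0) ^ 2) (s := 0) (by norm_num) hRpos ?_
      (hbzero α₁)
    intro x hx
    rw [Real.rpow_zero, mul_one]
    rcases lt_or_ge x ε₀ with hxe | hxe
    · rw [hkey α₁ x hx hxe, sub_self, zero_mul, norm_zero]
      simpa using sq_nonneg (max C₀ 0)
    · rcases le_or_gt x R with hxR | hxR
      · have hb := hC₀ x ⟨by linarith, hxR⟩
        have : ‖besselOp α₁ f F2 x‖ ≤ max C₀ 0 := le_trans hb (le_max_left _ _)
        exact pow_le_pow_left₀ (norm_nonneg _) this 2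
      · rw [hbzero α₁ x hxR.le, norm_zero]
        simpa using sq_nonneg (max C₀ 0)
  -- 4. besselOp α₂ ∉ L²
  · intro hmem
    have hne : α₂ - α₁ ≠ 0 := sub_ne_zero.mpr h12.symm
    have hint : Integrable (fun x => ‖besselOp α₂ f F2 x‖ ^ 2) halfLineMeasure :=
      (memLp_two_iff_integrable_sq_norm hmem.1).1 hmem
    have hint' : IntegrableOn (fun x => ‖besselOp α₂ f F2 x‖ ^ 2) (Set.Ioi 0) volume := hint
    have h2 : IntegrableOn (fun x => ‖besselOp α₂ f F2 x‖ ^ 2) (Set.Ioo 0 ε₀) volume :=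
      hint'.mono_set Set.Ioo_subset_Ioi_self
    have h3 : Set.EqOn (fun x => ‖besselOp α₂ f F2 x‖ ^ 2)
        (fun x => (‖α₂ - α₁‖) ^ 2 * x ^ ((c.re - 2) * 2)) (Set.Ioo 0 ε₀) := by
      intro x hx
      have hx1 := hx.1
      have hx2 := hx.2
      simp only
      rw [hkey α₂ x hx1 hx2, norm_mul,
        Complex.norm_cpow_eq_rpow_re_of_pos hx1]
      have hre : (c - 2).re = c.re - 2 := by simp
      rw [hre]
      have h2' : (x ^ (c.re - 2)) ^ 2 = x ^ ((c.re - 2) * 2) := by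
        rw [← Real.rpow_natCast (x ^ (c.re - 2)) 2, ← Real.rpow_mul hx1.le]
        norm_num
      rw [mul_pow, h2']
    have h4 : IntegrableOn (fun x : ℝ => (‖α₂ - α₁‖) ^ 2 * x ^ ((c.re - 2) * 2))
        (Set.Ioo 0 ε₀) volume := (integrableOn_congr_fun h3 measurableSet_Ioo).1 h2
    have hk : (‖α₂ - α₁‖) ^ 2 ≠ 0 := pow_ne_zero _ (norm_ne_zero_iff.mpr hne)
    have h5 : IntegrableOn (fun x : ℝ => x ^ ((c.re - 2) * 2)) (Set.Ioo 0 ε₀) volume := by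
      have h6 : IntegrableOn
          (fun x : ℝ => ((‖α₂ - α₁‖) ^ 2)⁻¹ * ((‖α₂ - α₁‖) ^ 2 * x ^ ((c.re - 2) * 2)))
          (Set.Ioo 0 ε₀) volume := h4.const_mul ((‖α₂ - α₁‖) ^ 2)⁻¹
      refine h6.congr_fun (fun x hx => ?_) measurableSet_Ioo
      field_simp
    rw [intervalIntegral.integrableOn_Ioo_rpow_iff hε₀] at h5
    rw [hcre] at h5
    linarith


end
end

section
/- Let m₁, m₂ ∈ ℂ with m₁ ≠ m₂, |Re m₁| < 1 and |Re m₂| < 1, and let ξ ∈ C_c^∞[0,∞) with ξ = 1 near 0. Then there exist no c ∈ ℂ and f₀ ∈ H₀²(ℝ₊) such that x^{1/2+m₁} ξ(x) = f₀(x) + c x^{1/2+m₂} ξ(x) for all x > 0. Consequently the domains D(H_{m₁}) = H₀²(ℝ₊) + ℂ x^{1/2+m₁}ξ and D(H_{m₂}) = H₀²(ℝ₊) + ℂ x^{1/2+m₂}ξ of the homogeneous Bessel operators are distinct. -/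
open MeasureTheory Set Filter Topology
open scoped ENNReal

noncomputable section

lemma hasDerivAt_ofReal_cpow' (s : ℂ) {x : ℝ} (hx : 0 < x) :
    HasDerivAt (fun y : ℝ => (y:ℂ) ^ s) (s * (x:ℂ) ^ (s - 1)) x := by
  by_cases hs : s = 0
  · subst hs
    have h : (fun y : ℝ => (y:ℂ) ^ (0:ℂ)) = fun _ => 1 := funext fun y => Complex.cpow_zero _
    rw [h]
    simpa using hasDerivAt_const x (1:ℂ)
  · have h := hasDerivAt_ofReal_cpow_const' hx.ne' (r := s - 1) (by
      intro h; apply hs; linear_combination h)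
    have h2 := h.const_mul s
    simp only [sub_add_cancel] at h2
    have : (fun y : ℝ => s * ((y:ℂ) ^ s / s)) = fun y : ℝ => (y:ℂ) ^ s := by
      funext y; field_simp
    rwa [this] at h2

lemma norm_cpow_real {a : ℝ} (ha : 0 < a) (w : ℂ) : ‖(a:ℂ)^w‖ = a ^ w.re := by
  rw [Complex.norm_cpow_eq_rpow_re_of_pos ha]

lemma tendsto_rpow_zero {r : ℝ} (hr : 0 < r) :
    Tendsto (fun a : ℝ => a ^ r) (𝓝[>] 0) (𝓝 0) := by
  have := (Real.continuousAt_rpow_const 0 r (Or.inr hr.le)).tendsto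
  rw [Real.zero_rpow hr.ne'] at this
  exact this.mono_left nhdsWithin_le_nhds

lemma tendsto_cpow_zero {w : ℂ} (hw : 0 < w.re) :
    Tendsto (fun a : ℝ => (a:ℂ)^w) (𝓝[>] 0) (𝓝 0) := by
  refine squeeze_zero_norm' ?_ (tendsto_rpow_zero hw)
  filter_upwards [self_mem_nhdsWithin] with a (ha : 0 < a)
  rw [norm_cpow_real ha]

lemma tendsto_rpow_atTop_zero {r : ℝ} (hr : r < 0) :
    Tendsto (fun a : ℝ => a ^ r) (𝓝[>] 0) atTop := by
  have h1 : Tendsto (fun a : ℝ => a ^ (-r)) (𝓝[>] 0) (𝓝[>] 0) := by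
    apply tendsto_nhdsWithin_of_tendsto_nhds_of_eventually_within
    · exact tendsto_rpow_zero (by linarith)
    · filter_upwards [self_mem_nhdsWithin] with a (ha : 0 < a)
      exact Real.rpow_pos_of_pos ha _
  have h2 : Tendsto (fun a : ℝ => (a ^ (-r))⁻¹) (𝓝[>] 0) atTop := by
    exact h1.inv_tendsto_nhdsGT_zero
  apply h2.congr'
  filter_upwards [self_mem_nhdsWithin] with a (ha : 0 < a)
  rw [← Real.rpow_neg ha.le, neg_neg]

lemma cpow_seq_val {w : ℂ} (hw : w.re = 0) {γ : ℝ} (hγ : w.im = γ) (hγ0 : γ ≠ 0) (t : ℝ) :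
    ((Real.exp (t / γ) : ℝ) : ℂ) ^ w = Complex.exp (t * Complex.I) := by
  have hx : (0:ℝ) < Real.exp (t / γ) := Real.exp_pos _
  rw [Complex.cpow_def_of_ne_zero (by exact_mod_cast hx.ne')]
  rw [← Complex.ofReal_log hx.le, Real.log_exp]
  have hwI : w = (γ : ℂ) * Complex.I := by
    apply Complex.ext <;> simp [hw, hγ]
  rw [hwI]
  congr 1
  push_cast
  have : (γ:ℂ) ≠ 0 := by exact_mod_cast hγ0
  field_simp

lemma not_tendsto_cpow_imaginary {w : ℂ} (hw : w.re = 0) (hw0 : w ≠ 0) (L : ℂ) :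
    ¬ Tendsto (fun a : ℝ => (a:ℂ) ^ w) (𝓝[>] 0) (𝓝 L) := by
  intro hT
  set γ : ℝ := w.im with hγ
  have hγ0 : γ ≠ 0 := by
    intro h
    exact hw0 (Complex.ext hw h)
  -- sign constant k with k/γ < 0
  set k : ℝ := if 0 < γ then -1 else 1 with hk
  have hkγ : k / γ < 0 := by
    rcases lt_or_gt_of_ne hγ0 with h | h
    · rw [hk, if_neg (not_lt.mpr h.le)]
      exact div_neg_of_pos_of_neg one_pos h
    · rw [hk, if_pos h]
      exact div_neg_of_neg_of_pos (by norm_num) h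
  have hkval : k = 1 ∨ k = -1 := by
    rw [hk]; split <;> simp
  -- sequences
  have hseq : ∀ c : ℝ, Tendsto (fun n : ℕ => Real.exp ((2 * Real.pi * n * k + c) / γ))
      (atTop) (𝓝[>] 0) := by
    intro c
    apply tendsto_nhdsWithin_of_tendsto_nhds_of_eventually_within
    · apply Real.tendsto_exp_atBot.comp
      have : ∀ n : ℕ, (2 * Real.pi * n * k + c) / γ = (2 * Real.pi * (k / γ)) * n + c / γ := by
        intro n; field_simp
      simp only [this]
      apply Tendsto.atBot_add _ tendsto_const_nhds
      exact (tendsto_const_mul_atBot_of_neg (mul_neg_of_pos_of_neg (by positivity) hkγ)).mpr tendsto_natCast_atTop_atTop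
    · exact Eventually.of_forall fun n => Real.exp_pos _
  -- values along sequences
  have hper : ∀ n : ℕ, Complex.exp (((2 * Real.pi * n * k : ℝ) : ℂ) * Complex.I) = 1 := by
    intro n
    rcases hkval with h | h <;> rw [h]
    · have e : ((2 * Real.pi * n * 1 : ℝ) : ℂ) * Complex.I = (n : ℤ) * (2 * Real.pi * Complex.I) := by
        push_cast; ring
      rw [e, Complex.exp_int_mul_two_pi_mul_I]
    · have e : ((2 * Real.pi * n * (-1) : ℝ) : ℂ) * Complex.I = ((-n : ℤ)) * (2 * Real.pi * Complex.I) := by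
        push_cast; ring
      rw [e, Complex.exp_int_mul_two_pi_mul_I]
  have hval1 : ∀ n : ℕ, ((Real.exp ((2 * Real.pi * n * k + 0) / γ) : ℝ) : ℂ) ^ w = 1 := by
    intro n
    rw [cpow_seq_val hw rfl hγ0,
      show ((2 * Real.pi * n * k + 0 : ℝ) : ℂ) = ((2 * Real.pi * n * k : ℝ) : ℂ) by norm_num]
    exact hper n
  have hval2 : ∀ n : ℕ, ((Real.exp ((2 * Real.pi * n * k + Real.pi) / γ) : ℝ) : ℂ) ^ w = -1 := by
    intro n
    rw [cpow_seq_val hw rfl hγ0]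
    have split : ((2 * Real.pi * n * k + Real.pi : ℝ) : ℂ) * Complex.I
        = ((2 * Real.pi * n * k : ℝ) : ℂ) * Complex.I + (Real.pi : ℂ) * Complex.I := by
      push_cast; ring
    rw [split, Complex.exp_add, Complex.exp_pi_mul_I, hper n, one_mul]
  -- limits
  have hL1 : L = 1 := by
    have := hT.comp (hseq 0)
    have heq : (fun n : ℕ => ((Real.exp ((2 * Real.pi * n * k + 0) / γ) : ℝ) : ℂ) ^ w)
        = fun _ => (1 : ℂ) := funext hval1
    rw [show ((fun a : ℝ => (a:ℂ) ^ w) ∘ fun n : ℕ => Real.exp ((2 * Real.pi * n * k + 0) / γ))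
        = fun n : ℕ => ((Real.exp ((2 * Real.pi * n * k + 0) / γ) : ℝ) : ℂ) ^ w from rfl,
      heq] at this
    exact (tendsto_nhds_unique tendsto_const_nhds this).symm
  have hL2 : L = -1 := by
    have := hT.comp (hseq Real.pi)
    have heq : (fun n : ℕ => ((Real.exp ((2 * Real.pi * n * k + Real.pi) / γ) : ℝ) : ℂ) ^ w)
        = fun _ => (-1 : ℂ) := funext hval2
    rw [show ((fun a : ℝ => (a:ℂ) ^ w) ∘ fun n : ℕ => Real.exp ((2 * Real.pi * n * k + Real.pi) / γ))
        = fun n : ℕ => ((Real.exp ((2 * Real.pi * n * k + Real.pi) / γ) : ℝ) : ℂ) ^ w from rfl,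
      heq] at this
    exact (tendsto_nhds_unique tendsto_const_nhds this).symm
  rw [hL1] at hL2
  norm_num at hL2

lemma single_power_bounded {B v : ℂ} (hv : v.re < 0) {C : ℝ}
    (h : ∀ᶠ (a : ℝ) in 𝓝[>] (0:ℝ), ‖B * (a:ℂ)^v‖ ≤ C) : B = 0 := by
  by_contra hB
  have hT : Tendsto (fun a : ℝ => ‖B‖ * a ^ v.re) (𝓝[>] (0:ℝ)) atTop :=
    (tendsto_rpow_atTop_zero hv).const_mul_atTop (norm_pos_iff.mpr hB)
  have h2 : ∀ᶠ (a : ℝ) in 𝓝[>] (0:ℝ), ‖B‖ * a ^ v.re ≤ C := by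
    filter_upwards [h, self_mem_nhdsWithin] with a ha (ha0 : 0 < a)
    rw [← norm_cpow_real ha0 v, ← norm_mul]
    exact ha
  have h3 := hT.eventually_gt_atTop C
  obtain ⟨a, h4, h5⟩ := (h2.and h3).exists
  linarith

lemma power_combo_A_eq_zero {A B u v : ℂ} (huv : u ≠ v) (hle : u.re ≤ v.re)
    (hu : u.re < 0) {C : ℝ}
    (h : ∀ᶠ (a : ℝ) in 𝓝[>] (0:ℝ), ‖A * (a:ℂ)^u + B * (a:ℂ)^v‖ ≤ C) : A = 0 := by
  have hkey : ∀ᶠ (a : ℝ) in 𝓝[>] (0:ℝ),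
      ‖A + B * (a:ℂ)^(v - u)‖ ≤ C * a ^ (-u.re) := by
    filter_upwards [h, self_mem_nhdsWithin] with a ha (ha0 : 0 < a)
    have hane : (a:ℂ) ≠ 0 := by exact_mod_cast ha0.ne'
    have h1 : (a:ℂ)^(-u) * (a:ℂ)^u = 1 := by
      rw [← Complex.cpow_add _ _ hane, neg_add_cancel, Complex.cpow_zero]
    have h2 : (a:ℂ)^(-u) * (a:ℂ)^v = (a:ℂ)^(v - u) := by
      rw [← Complex.cpow_add _ _ hane]; congr 1; ring
    have hsplit : A + B * (a:ℂ)^(v - u) = (a:ℂ)^(-u) * (A * (a:ℂ)^u + B * (a:ℂ)^v) := by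
      linear_combination (-A) * h1 + (-B) * h2
    rw [hsplit, norm_mul, norm_cpow_real ha0, Complex.neg_re, mul_comm]
    exact mul_le_mul_of_nonneg_right ha (Real.rpow_nonneg ha0.le _)
  rcases eq_or_lt_of_le hle with heq | hlt
  · -- equal real parts: oscillation
    have hre : (v - u).re = 0 := by simp [← heq]
    have hvu0 : v - u ≠ 0 := sub_ne_zero.mpr (Ne.symm huv)
    have hlim : Tendsto (fun a : ℝ => A + B * (a:ℂ)^(v - u)) (𝓝[>] (0:ℝ)) (𝓝 0) :=
      squeeze_zero_norm' hkey
        (by simpa using (tendsto_rpow_zero (neg_pos.mpr hu)).const_mul C)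
    by_cases hB : B = 0
    · simp only [hB, zero_mul, add_zero] at hlim
      exact tendsto_nhds_unique tendsto_const_nhds hlim
    · exfalso
      have hlim2 : Tendsto (fun a : ℝ => (a:ℂ)^(v - u)) (𝓝[>] (0:ℝ)) (𝓝 (B⁻¹ * (0 - A))) := by
        have h1 : Tendsto (fun a : ℝ => B⁻¹ * ((A + B * (a:ℂ)^(v - u)) - A))
            (𝓝[>] (0:ℝ)) (𝓝 (B⁻¹ * (0 - A))) := ((hlim.sub_const A).const_mul B⁻¹)
        apply h1.congr
        intro a
        field_simp
        ring
      exact not_tendsto_cpow_imaginary hre hvu0 _ hlim2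
  · -- strictly smaller: A + B a^(v-u) → A and → 0
    have hlim : Tendsto (fun a : ℝ => A + B * (a:ℂ)^(v - u)) (𝓝[>] (0:ℝ)) (𝓝 0) :=
      squeeze_zero_norm' hkey
        (by simpa using (tendsto_rpow_zero (neg_pos.mpr hu)).const_mul C)
    have hlim2 : Tendsto (fun a : ℝ => A + B * (a:ℂ)^(v - u)) (𝓝[>] (0:ℝ)) (𝓝 (A + B * 0)) :=
      tendsto_const_nhds.add ((tendsto_cpow_zero (by simp [Complex.sub_re]; linarith)).const_mul B)
    have := tendsto_nhds_unique hlim2 hlim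
    simpa using this

lemma power_combo_eq_zero {A B u v : ℂ} (huv : u ≠ v) (hu : u.re < 0) (hv : v.re < 0)
    {C : ℝ} (h : ∀ᶠ (a : ℝ) in 𝓝[>] (0:ℝ), ‖A * (a:ℂ)^u + B * (a:ℂ)^v‖ ≤ C) :
    A = 0 ∧ B = 0 := by
  rcases le_total u.re v.re with hle | hle
  · have hA := power_combo_A_eq_zero huv hle hu h
    refine ⟨hA, single_power_bounded (C := C) hv ?_⟩
    filter_upwards [h] with a ha
    simpa [hA] using ha
  · have h' : ∀ᶠ (a : ℝ) in 𝓝[>] (0:ℝ), ‖B * (a:ℂ)^v + A * (a:ℂ)^u‖ ≤ C := by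
      filter_upwards [h] with a ha; rwa [add_comm] at ha
    have hB := power_combo_A_eq_zero (Ne.symm huv) hle hv h'
    refine ⟨single_power_bounded (C := C) hu ?_, hB⟩
    filter_upwards [h] with a ha
    simpa [hB] using ha

lemma setIntegral_L2_bound {f : ℝ → ℂ}
    (hf : MemLp f 2 (volume.restrict (Set.Ioi (0:ℝ))))
    {a b : ℝ} (ha : 0 < a) (hab : a ≤ b) :
    ‖∫ t in a..b, f t‖ ≤
      (eLpNorm f 2 (volume.restrict (Set.Ioi (0:ℝ)))).toReal * (b - a) ^ ((1:ℝ)/2) := by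
  have hsub : Set.Ioc a b ⊆ Set.Ioi (0:ℝ) := fun x hx => lt_of_lt_of_le ha hx.1.le
  have hmono : volume.restrict (Set.Ioc a b) ≤ volume.restrict (Set.Ioi (0:ℝ)) :=
    Measure.restrict_mono hsub le_rfl
  have hmeas : AEStronglyMeasurable f (volume.restrict (Set.Ioc a b)) :=
    hf.aestronglyMeasurable.mono_measure hmono
  rw [intervalIntegral.integral_of_le hab]
  calc ‖∫ x in Set.Ioc a b, f x‖ ≤ ∫ x in Set.Ioc a b, ‖f x‖ := norm_integral_le_integral_norm f
    _ = (eLpNorm f 1 (volume.restrict (Set.Ioc a b))).toReal := by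
        rw [integral_norm_eq_lintegral_enorm hmeas, eLpNorm_one_eq_lintegral_enorm]
    _ ≤ _ := by
        have hstep : eLpNorm f 1 (volume.restrict (Set.Ioc a b)) ≤
            eLpNorm f 2 (volume.restrict (Set.Ioi (0:ℝ)))
              * (ENNReal.ofReal (b - a)) ^ ((1:ℝ)/2) := by
          calc eLpNorm f 1 (volume.restrict (Set.Ioc a b))
              ≤ eLpNorm f 2 (volume.restrict (Set.Ioc a b))
                  * (volume.restrict (Set.Ioc a b)) Set.univ
                    ^ (1 / (1:ℝ≥0∞).toReal - 1 / (2:ℝ≥0∞).toReal) :=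
                eLpNorm_le_eLpNorm_mul_rpow_measure_univ (by norm_num) hmeas
            _ ≤ eLpNorm f 2 (volume.restrict (Set.Ioi (0:ℝ)))
                  * (ENNReal.ofReal (b - a)) ^ ((1:ℝ)/2) := by
                gcongr
                · apply le_of_eq
                  rw [Measure.restrict_apply_univ, Real.volume_Ioc]
                  norm_num
        have hfin : eLpNorm f 2 (volume.restrict (Set.Ioi (0:ℝ)))
            * (ENNReal.ofReal (b - a)) ^ ((1:ℝ)/2) ≠ ⊤ :=
          ENNReal.mul_ne_top hf.eLpNorm_ne_top (by
            apply ENNReal.rpow_ne_top_of_nonneg (by norm_num) ENNReal.ofReal_ne_top)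
        have := ENNReal.toReal_mono hfin hstep
        rwa [ENNReal.toReal_mul, ← ENNReal.toReal_rpow, ENNReal.toReal_ofReal (by linarith)]
          at this


/-- `D(H_{m₁}) ≠ D(H_{m₂})` for `m₁ ≠ m₂`, `|Re mᵢ| < 1`. -/
theorem homogeneous_domains_differ (m₁ m₂ : ℂ) (h : m₁ ≠ m₂)
    (h1 : |m₁.re| < 1) (h2 : |m₂.re| < 1) (ξ : ℝ → ℂ) (hξ : IsCutoff ξ) :
    (¬ ∃ (c : ℂ) (f₀ : ℝ → ℂ), MemH02 f₀ ∧
        ∀ x ∈ Set.Ioi (0:ℝ),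
          (x : ℂ) ^ ((1:ℂ)/2 + m₁) * ξ x = f₀ x + c * (x : ℂ) ^ ((1:ℂ)/2 + m₂) * ξ x) ∧
    {f : ℝ → ℂ | ∃ (c : ℂ) (f₀ : ℝ → ℂ), MemH02 f₀ ∧
        ∀ x ∈ Set.Ioi (0:ℝ), f x = f₀ x + c * (x : ℂ) ^ ((1:ℂ)/2 + m₁) * ξ x} ≠
    {f : ℝ → ℂ | ∃ (c : ℂ) (f₀ : ℝ → ℂ), MemH02 f₀ ∧
        ∀ x ∈ Set.Ioi (0:ℝ), f x = f₀ x + c * (x : ℂ) ^ ((1:ℂ)/2 + m₂) * ξ x} := by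
  have hmin : MemH02 (fun _ : ℝ => (0:ℂ)) := by
    refine ⟨fun _ => 0, ?_, ⟨fun x _ => differentiableAt_const 0, fun a _ b _ => ?_⟩, ?_, ?_, ?_⟩
    · exact MemLp.zero'
    · constructor
      · exact intervalIntegrable_const
      · simp [deriv_const']
    · exact MemLp.zero'
    · exact tendsto_const_nhds
    · simp only [deriv_const']
      exact tendsto_const_nhds
  have part1 : ¬ ∃ (c : ℂ) (f₀ : ℝ → ℂ), MemH02 f₀ ∧
      ∀ x ∈ Set.Ioi (0:ℝ),
        (x : ℂ) ^ ((1:ℂ)/2 + m₁) * ξ x = f₀ x + c * (x : ℂ) ^ ((1:ℂ)/2 + m₂) * ξ x := by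
    rintro ⟨c, f₀, hmem, heq⟩
    obtain ⟨f'', hf2, hAC, hf''2, hT0, hT1⟩ := hmem
    obtain ⟨hdiff, hFTC⟩ := hAC
    obtain ⟨hsm, hsupp, ε, hεpos, hξ1⟩ := hξ
    set s₁ : ℂ := (1:ℂ)/2 + m₁ with hs₁
    set s₂ : ℂ := (1:ℂ)/2 + m₂ with hs₂
    set F : ℝ → ℂ := fun x => (x:ℂ)^s₁ - c * (x:ℂ)^s₂ with hFdef
    set F' : ℝ → ℂ := fun x => s₁ * (x:ℂ)^(s₁-1) - c * (s₂ * (x:ℂ)^(s₂-1)) with hF'def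
    have hF : ∀ x ∈ Set.Ioo (0:ℝ) ε, f₀ x = F x := by
      intro x hx
      have h := heq x (Set.mem_Ioi.mpr hx.1)
      rw [hξ1 x hx.2] at h
      simp only [hFdef, mul_one] at h ⊢
      linear_combination -h
    have hIooN : Set.Ioo (0:ℝ) ε ∈ 𝓝[>] (0:ℝ) :=
      Ioo_mem_nhdsGT_of_mem ⟨le_refl 0, hεpos⟩
    have hFderiv : ∀ x ∈ Set.Ioo (0:ℝ) ε, HasDerivAt F (F' x) x := fun x hx =>
      ((hasDerivAt_ofReal_cpow' s₁ hx.1).sub ((hasDerivAt_ofReal_cpow' s₂ hx.1).const_mul c))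
    have hderiv_eq : ∀ x ∈ Set.Ioo (0:ℝ) ε, deriv f₀ x = F' x := by
      intro x hx
      have hev : f₀ =ᶠ[𝓝 x] F := by
        filter_upwards [isOpen_Ioo.mem_nhds hx] with y hy
        exact hF y hy
      rw [hev.deriv_eq, (hFderiv x hx).deriv]
    have hT1' : Tendsto F' (𝓝[>] (0:ℝ)) (𝓝 0) := by
      apply hT1.congr'
      filter_upwards [hIooN] with x hx
      exact hderiv_eq x hx
    set C : ℝ := (eLpNorm f'' 2 halfLineMeasure).toReal with hC
    have hf''2' : MemLp f'' 2 (volume.restrict (Set.Ioi (0:ℝ))) := hf''2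
    have hHold : ∀ b ∈ Set.Ioo (0:ℝ) ε, ∀ a ∈ Set.Ioo (0:ℝ) b,
        ‖F' b - F' a‖ ≤ C * (b - a) ^ ((1:ℝ)/2) := by
      intro b hb a ha
      have hamem : a ∈ Set.Ioi (0:ℝ) := ha.1
      have hbmem : b ∈ Set.Ioi (0:ℝ) := hb.1
      have h1 := (hFTC a hamem b hbmem).2
      rw [hderiv_eq b hb, hderiv_eq a ⟨ha.1, ha.2.trans hb.2⟩] at h1
      rw [h1]
      exact setIntegral_L2_bound hf''2' ha.1 ha.2.le
    have hbound : ∀ b ∈ Set.Ioo (0:ℝ) ε, ‖F' b‖ ≤ C * b ^ ((1:ℝ)/2) := by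
      intro b hb
      have hev : ∀ᶠ (a : ℝ) in 𝓝[>] (0:ℝ), ‖F' b - F' a‖ ≤ C * (b - a) ^ ((1:ℝ)/2) := by
        filter_upwards [Ioo_mem_nhdsGT_of_mem ⟨le_refl 0, hb.1⟩] with a ha
        exact hHold b hb a ha
      have hL : Tendsto (fun a : ℝ => ‖F' b - F' a‖) (𝓝[>] (0:ℝ)) (𝓝 ‖F' b - 0‖) :=
        (tendsto_const_nhds.sub hT1').norm
      have hR : Tendsto (fun a : ℝ => C * (b - a) ^ ((1:ℝ)/2)) (𝓝[>] (0:ℝ))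
          (𝓝 (C * (b - 0) ^ ((1:ℝ)/2))) := by
        apply Tendsto.const_mul
        have hsub : Tendsto (fun a : ℝ => b - a) (𝓝[>] (0:ℝ)) (𝓝 (b - 0)) :=
          tendsto_const_nhds.sub (tendsto_id.mono_left nhdsWithin_le_nhds)
        exact ((Real.continuousAt_rpow_const (b - 0) ((1:ℝ)/2)
          (Or.inl (by simpa using hb.1.ne'))).tendsto).comp hsub
      have := le_of_tendsto_of_tendsto hL hR hev
      simpa using this
    have hcombo : ∀ᶠ (a : ℝ) in 𝓝[>] (0:ℝ),
        ‖s₁ * (a:ℂ)^(m₁ - 1) + (-(c * s₂)) * (a:ℂ)^(m₂ - 1)‖ ≤ C := by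
      filter_upwards [hIooN] with a ha
      have h := hbound a ha
      have hane : (a:ℂ) ≠ 0 := by exact_mod_cast ha.1.ne'
      have hsplit : F' a = (s₁ * (a:ℂ)^(m₁ - 1) + (-(c * s₂)) * (a:ℂ)^(m₂ - 1))
          * (a:ℂ)^((1:ℂ)/2) := by
        have e1 : (a:ℂ)^(s₁ - 1) = (a:ℂ)^(m₁ - 1) * (a:ℂ)^((1:ℂ)/2) := by
          rw [← Complex.cpow_add _ _ hane]
          congr 1
          rw [hs₁]; ring
        have e2 : (a:ℂ)^(s₂ - 1) = (a:ℂ)^(m₂ - 1) * (a:ℂ)^((1:ℂ)/2) := by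
          rw [← Complex.cpow_add _ _ hane]
          congr 1
          rw [hs₂]; ring
        rw [hF'def]
        simp only [e1, e2]
        ring
      rw [hsplit, norm_mul, norm_cpow_real ha.1] at h
      have hre : ((1:ℂ)/2).re = (1:ℝ)/2 := by norm_num
      rw [hre] at h
      have hpos : (0:ℝ) < a ^ ((1:ℝ)/2) := Real.rpow_pos_of_pos ha.1 _
      exact le_of_mul_le_mul_right h hpos
    have hm₁lt : m₁.re < 1 := (abs_lt.mp h1).2
    have hm₂lt : m₂.re < 1 := (abs_lt.mp h2).2
    have hzero := power_combo_eq_zero (u := m₁ - 1) (v := m₂ - 1)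
      (by intro hh; exact h (by linear_combination hh))
      (by simp [Complex.sub_re]; linarith)
      (by simp [Complex.sub_re]; linarith) hcombo
    have hs₁0 : s₁ = 0 := hzero.1
    have hc0 : c = 0 := by
      rcases mul_eq_zero.mp (neg_eq_zero.mp hzero.2) with hh | hh
      · exact hh
      · exfalso
        apply h
        have : m₁ = -(1/2 : ℂ) := by rw [hs₁] at hs₁0; linear_combination hs₁0
        have h2' : m₂ = -(1/2 : ℂ) := by rw [hs₂] at hh; linear_combination hh
        rw [this, h2']
    have hT0' : Tendsto F (𝓝[>] (0:ℝ)) (𝓝 0) := by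
      apply hT0.congr'
      filter_upwards [hIooN] with x hx
      exact hF x hx
    have hFone : ∀ᶠ (x : ℝ) in 𝓝[>] (0:ℝ), F x = 1 := by
      filter_upwards [self_mem_nhdsWithin] with x _
      rw [hFdef]
      simp [hs₁0, hc0]
    have : Tendsto (fun _ : ℝ => (1:ℂ)) (𝓝[>] (0:ℝ)) (𝓝 0) :=
      hT0'.congr' hFone
    have h10 : (1:ℂ) = 0 := tendsto_nhds_unique tendsto_const_nhds this
    exact one_ne_zero h10
  refine ⟨part1, ?_⟩
  intro hEq
  apply part1
  have hmem : (fun x : ℝ => (x:ℂ) ^ ((1:ℂ)/2 + m₁) * ξ x) ∈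
      {f : ℝ → ℂ | ∃ (c : ℂ) (f₀ : ℝ → ℂ), MemH02 f₀ ∧
        ∀ x ∈ Set.Ioi (0:ℝ), f x = f₀ x + c * (x : ℂ) ^ ((1:ℂ)/2 + m₁) * ξ x} :=
    ⟨1, fun _ => 0, hmin, fun x _ => by simp⟩
  rw [hEq] at hmem
  obtain ⟨c, f₀, h0, hx⟩ := hmem
  exact ⟨c, f₀, h0, fun x hx' => hx x hx'⟩

end
end

section
/- Let m ∈ ℂ with Re m = 1, let a > 0 and g ∈ L²[0,a], and let f(x) = ∫₀^a G_m(x,y) g(y) dy for x ∈ (0,a). Then lim_{x→0⁺} ( 2m x^{−1/2−m} f(x) − ∫_x^a y^{1/2−m} g(y) dy ) = 0. In particular, if the limit lim_{x→0⁺} ∫_x^a y^{1/2−m} g(y) dy does not exist, then f does not belong to H₀²(ℝ₊) + ℂ x^{1/2+m}ξ (with ξ ∈ C_c^∞[0,∞) equal to 1 near 0) on any neighborhood of 0. -/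
open MeasureTheory Set Filter Topology
open scoped ENNReal

noncomputable section

lemma cpowCont (w : ℂ) : ContinuousOn (fun y : ℝ => (y:ℂ)^w) (Ioi 0) :=
  fun x hx => (Complex.continuousAt_ofReal_cpow_const x w (Or.inr (ne_of_gt hx))).continuousWithinAt

lemma norm_cpow_pos {x : ℝ} (hx : 0 < x) (w : ℂ) : ‖(x:ℂ)^w‖ = x ^ w.re := by
  rw [Complex.norm_cpow_eq_rpow_re_of_pos hx]

lemma re_half_add {m : ℂ} (hm : m.re = 1) : ((1:ℂ)/2 + m).re = 3/2 := by
  simp [Complex.add_re, hm]; norm_num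

lemma re_half_sub {m : ℂ} (hm : m.re = 1) : ((1:ℂ)/2 - m).re = -(1/2) := by
  simp [Complex.sub_re, hm]; norm_num

lemma integrableOn_weight_mul {g : ℝ → ℂ} {a : ℝ} (hg : MemLp g 2 (volume.restrict (Ioo 0 a)))
    {s : Set ℝ} (hs : MeasurableSet s) (hsub : s ⊆ Ioo 0 a) (w : ℂ) {C : ℝ}
    (hC : ∀ y ∈ s, ‖(y:ℂ)^w‖ ≤ C) :
    IntegrableOn (fun y : ℝ => (y:ℂ)^w * g y) s := by
  have hrr : (volume.restrict (Ioo 0 a)).restrict s = volume.restrict s := by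
    rw [Measure.restrict_restrict hs, inter_eq_self_of_subset_left hsub]
  have hg' : MemLp g 2 (volume.restrict s) := hrr ▸ hg.restrict s
  have : IsFiniteMeasure (volume.restrict s) := by
    constructor
    rw [Measure.restrict_apply_univ]
    exact lt_of_le_of_lt (measure_mono hsub) measure_Ioo_lt_top
  have hgi : Integrable g (volume.restrict s) := hg'.integrable one_le_two
  have haesm : AEStronglyMeasurable (fun y : ℝ => (y:ℂ)^w) (volume.restrict s) :=
    ((cpowCont w).mono (fun y hy => (hsub hy).1)).aestronglyMeasurable hs
  exact hgi.bdd_mul haesm ((ae_restrict_iff' hs).mpr (ae_of_all _ hC))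

lemma GKer_split {m : ℂ} (hm : m.re = 1) {a x : ℝ} (hx : x ∈ Ioo 0 a)
    {g : ℝ → ℂ} (hg : MemLp g 2 (volume.restrict (Ioo 0 a))) :
    ∫ y in Ioo (0:ℝ) a, GKer m x y * g y
      = (1/(2*m)) * ((x:ℂ)^((1:ℂ)/2+m) * ∫ y in Ioo x a, (y:ℂ)^((1:ℂ)/2-m) * g y)
        + (1/(2*m)) * ((x:ℂ)^((1:ℂ)/2-m) * ∫ y in Ioo (0:ℝ) x, (y:ℂ)^((1:ℂ)/2+m) * g y) := by
  obtain ⟨hx0, hxa⟩ := hx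
  -- integrability of the two weighted pieces
  have hint₂ : IntegrableOn (fun y : ℝ => (y:ℂ)^((1:ℂ)/2+m) * g y) (Ioo 0 x) := by
    refine integrableOn_weight_mul hg measurableSet_Ioo
      (Ioo_subset_Ioo le_rfl hxa.le) _ (C := x ^ (3/2 : ℝ)) ?_
    intro y hy
    rw [norm_cpow_pos hy.1, re_half_add hm]
    exact Real.rpow_le_rpow hy.1.le hy.2.le (by norm_num)
  have hint₁ : IntegrableOn (fun y : ℝ => (y:ℂ)^((1:ℂ)/2-m) * g y) (Ioo x a) := by
    refine integrableOn_weight_mul hg measurableSet_Ioo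
      (Ioo_subset_Ioo hx0.le le_rfl) _ (C := x ^ (-(1/2) : ℝ)) ?_
    intro y hy
    rw [norm_cpow_pos (hx0.trans hy.1), re_half_sub hm]
    exact Real.rpow_le_rpow_of_nonpos hx0 hy.1.le (by norm_num)
  -- equality of integrands on the two pieces
  have e₂ : EqOn (fun y : ℝ => (1/(2*m) * (x:ℂ)^((1:ℂ)/2-m)) * ((y:ℂ)^((1:ℂ)/2+m) * g y))
      (fun y => GKer m x y * g y) (Ioo 0 x) := by
    intro y hy
    simp only [GKer, if_neg (asymm hy.2), if_pos hy.2]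
    ring
  have e₁ : EqOn (fun y : ℝ => (1/(2*m) * (x:ℂ)^((1:ℂ)/2+m)) * ((y:ℂ)^((1:ℂ)/2-m) * g y))
      (fun y => GKer m x y * g y) (Ioo x a) := by
    intro y hy
    simp only [GKer, if_pos hy.1, if_neg (asymm hy.1)]
    ring
  have hk₂ : IntegrableOn (fun y => GKer m x y * g y) (Ioo 0 x) :=
    IntegrableOn.congr_fun (hint₂.const_mul _) e₂ measurableSet_Ioo
  have hk₁ : IntegrableOn (fun y => GKer m x y * g y) (Ioo x a) :=
    IntegrableOn.congr_fun (hint₁.const_mul _) e₁ measurableSet_Ioo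
  have hk₁' : IntegrableOn (fun y => GKer m x y * g y) (Ico x a) :=
    hk₁.congr_set_ae Ioo_ae_eq_Ico.symm
  have hdisj : Disjoint (Ioo (0:ℝ) x) (Ico x a) :=
    disjoint_left.mpr (fun y h1 h2 => absurd h2.1 (not_le.mpr h1.2))
  rw [← Ioo_union_Ico_eq_Ioo hx0 hxa.le,
    setIntegral_union hdisj measurableSet_Ico hk₂ hk₁',
    integral_Ico_eq_integral_Ioo,
    ← setIntegral_congr_fun measurableSet_Ioo e₂, ← setIntegral_congr_fun measurableSet_Ioo e₁,
    MeasureTheory.integral_const_mul, MeasureTheory.integral_const_mul]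
  ring


-- reusable: primitive of integrable function tends to 0
lemma primitive_tendsto_zero {h : ℝ → ℝ} {b : ℝ} (hb : 0 < b)
    (hint : IntegrableOn h (Ioo 0 b) volume) :
    Tendsto (fun x => ∫ t in Ioc (0:ℝ) x, h t) (𝓝[>] 0) (𝓝 0) := by
  have hicc : IntegrableOn h (Icc 0 b) volume := hint.congr_set_ae Ioo_ae_eq_Icc.symm
  have hcont := intervalIntegral.continuousOn_primitive (f := h) (μ := volume) (a := 0) (b := b) hicc
  have h0 : ContinuousWithinAt (fun x => ∫ t in Ioc (0:ℝ) x, h t) (Icc 0 b) 0 :=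
    hcont 0 ⟨le_rfl, hb.le⟩
  have h00 : (∫ t in Ioc (0:ℝ) (0:ℝ), h t) = 0 := by simp
  have := h0.tendsto
  rw [h00] at this
  refine this.mono_left (nhdsWithin_le_iff.mpr ?_)
  filter_upwards [Ioo_mem_nhdsGT_of_mem (Set.mem_Ico.mpr ⟨le_rfl, hb⟩)] with x hx
  exact ⟨hx.1.le, hx.2.le⟩



lemma csInt {μ : Measure ℝ} {u v : ℝ → ℝ} (hu0 : 0 ≤ᵐ[μ] u) (hv0 : 0 ≤ᵐ[μ] v)
    (hu : MemLp u 2 μ) (hv : MemLp v 2 μ) :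
    ∫ y, u y * v y ∂μ ≤ (∫ y, u y ^ (2:ℝ) ∂μ) ^ ((1:ℝ)/2) * (∫ y, v y ^ (2:ℝ) ∂μ) ^ ((1:ℝ)/2) := by
  have h2 : ENNReal.ofReal (2:ℝ) = 2 := by norm_num
  exact MeasureTheory.integral_mul_le_Lp_mul_Lq_of_nonneg
    (Real.HolderConjugate.two_two : (2:ℝ).HolderConjugate 2) hu0 hv0 (h2 ▸ hu) (h2 ▸ hv)

lemma memL2_sub {g : ℝ → ℂ} {a : ℝ} (hg : MemLp g 2 (volume.restrict (Ioo 0 a)))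
    {s : Set ℝ} (hs : MeasurableSet s) (hsub : s ⊆ Ioo 0 a) :
    MemLp g 2 (volume.restrict s) := by
  have hrr : (volume.restrict (Ioo 0 a)).restrict s = volume.restrict s := by
    rw [Measure.restrict_restrict hs, inter_eq_self_of_subset_left hsub]
  exact hrr ▸ hg.restrict s

lemma I2_bound {m : ℂ} (hm : m.re = 1) {a x : ℝ} (hx : x ∈ Ioo 0 a)
    {g : ℝ → ℂ} (hg : MemLp g 2 (volume.restrict (Ioo 0 a))) :
    ‖∫ y in Ioo (0:ℝ) x, (y:ℂ)^((1:ℂ)/2+m) * g y‖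
      ≤ x^2 * Real.sqrt (∫ y in Ioc (0:ℝ) x, ‖g y‖^(2:ℝ)) := by
  obtain ⟨hx0, hxa⟩ := hx
  set u : ℝ → ℝ := fun y => y ^ (3/2 : ℝ) with hu_def
  set v : ℝ → ℝ := fun y => ‖g y‖ with hv_def
  have hgx : MemLp g 2 (volume.restrict (Ioo 0 x)) :=
    memL2_sub hg measurableSet_Ioo (Ioo_subset_Ioo le_rfl hxa.le)
  have haesm_u : AEStronglyMeasurable u (volume.restrict (Ioo 0 x)) :=
    (ContinuousOn.aestronglyMeasurable
      (fun y _ => (Real.continuousAt_rpow_const y _ (Or.inr (by norm_num))).continuousWithinAt)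
      measurableSet_Ioo)
  have hbd : ∀ᵐ y ∂(volume.restrict (Ioo 0 x)), ‖u y‖ ≤ x ^ (3/2 : ℝ) := by
    refine (ae_restrict_iff' measurableSet_Ioo).mpr (ae_of_all _ fun y hy => ?_)
    rw [Real.norm_of_nonneg (Real.rpow_nonneg hy.1.le _)]
    exact Real.rpow_le_rpow hy.1.le hy.2.le (by norm_num)
  have hu : MemLp u 2 (volume.restrict (Ioo 0 x)) := MemLp.of_bound haesm_u _ hbd
  have hv : MemLp v 2 (volume.restrict (Ioo 0 x)) := hgx.norm
  have hu0 : 0 ≤ᵐ[volume.restrict (Ioo 0 x)] u := by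
    refine (ae_restrict_iff' measurableSet_Ioo).mpr (ae_of_all _ fun y hy => ?_)
    exact Real.rpow_nonneg hy.1.le _
  have hv0 : 0 ≤ᵐ[volume.restrict (Ioo 0 x)] v := ae_of_all _ fun y => norm_nonneg _
  have cs := csInt hu0 hv0 hu hv
  -- step 1+2 : norm of integral ≤ ∫ u * v
  have step1 : ‖∫ y in Ioo (0:ℝ) x, (y:ℂ)^((1:ℂ)/2+m) * g y‖ ≤ ∫ y in Ioo (0:ℝ) x, u y * v y := by
    refine (norm_integral_le_integral_norm _).trans_eq ?_
    refine setIntegral_congr_fun measurableSet_Ioo fun y hy => ?_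
    rw [norm_mul, norm_cpow_pos hy.1, re_half_add hm]
  -- step 4 : ∫ u^2 ≤ x^3 * x
  have step4 : (∫ y in Ioo (0:ℝ) x, u y ^ (2:ℝ)) ≤ x^3 * x := by
    have hx3 : x ^ ((3:ℕ):ℝ) = x^(3:ℕ) := Real.rpow_natCast x 3
    have hb : ∀ y ∈ Ioo (0:ℝ) x, ‖u y ^ (2:ℝ)‖ ≤ x^3 := by
      intro y hy
      have h1 : u y ^ (2:ℝ) = y ^ (3:ℝ) := by
        simp only [hu_def]
        rw [← Real.rpow_mul hy.1.le]
        norm_num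
      rw [h1, Real.norm_of_nonneg (Real.rpow_nonneg hy.1.le _), ← hx3]
      exact Real.rpow_le_rpow hy.1.le hy.2.le (by norm_num)
    have haesm2 : AEStronglyMeasurable (fun y => u y ^ (2:ℝ)) (volume.restrict (Ioo 0 x)) :=
      ContinuousOn.aestronglyMeasurable
        (fun y _ => ((Real.continuousAt_rpow_const y _ (Or.inr (by norm_num))).rpow_const
          (Or.inr (by norm_num))).continuousWithinAt) measurableSet_Ioo
    have := norm_setIntegral_le_of_norm_le_const measure_Ioo_lt_top hb
      (μ := volume) (s := Ioo (0:ℝ) x)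
    calc (∫ y in Ioo (0:ℝ) x, u y ^ (2:ℝ)) ≤ ‖∫ y in Ioo (0:ℝ) x, u y ^ (2:ℝ)‖ := le_abs_self _
      _ ≤ x^3 * (volume (Ioo (0:ℝ) x)).toReal := this
      _ = x^3 * x := by rw [Real.volume_Ioo]; norm_num [ENNReal.toReal_ofReal hx0.le]
  have sqrt4 : (∫ y in Ioo (0:ℝ) x, u y ^ (2:ℝ)) ^ ((1:ℝ)/2) ≤ x^2 := by
    rw [← Real.sqrt_eq_rpow]
    refine (Real.sqrt_le_sqrt step4).trans ?_
    rw [show x^3 * x = (x^2)^2 by ring, Real.sqrt_sq (sq_nonneg x)]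
  have step6 : (∫ y in Ioo (0:ℝ) x, v y ^ (2:ℝ)) = ∫ y in Ioc (0:ℝ) x, ‖g y‖^(2:ℝ) :=
    (integral_Ioc_eq_integral_Ioo).symm
  calc ‖∫ y in Ioo (0:ℝ) x, (y:ℂ)^((1:ℂ)/2+m) * g y‖
      ≤ ∫ y in Ioo (0:ℝ) x, u y * v y := step1
    _ ≤ (∫ y in Ioo (0:ℝ) x, u y ^ (2:ℝ)) ^ ((1:ℝ)/2) * (∫ y in Ioo (0:ℝ) x, v y ^ (2:ℝ)) ^ ((1:ℝ)/2) := cs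
    _ ≤ x^2 * (∫ y in Ioo (0:ℝ) x, v y ^ (2:ℝ)) ^ ((1:ℝ)/2) := by
        refine mul_le_mul_of_nonneg_right sqrt4 ?_
        positivity
    _ = x^2 * Real.sqrt (∫ y in Ioc (0:ℝ) x, ‖g y‖^(2:ℝ)) := by
        rw [step6, Real.sqrt_eq_rpow]


lemma part1 {m : ℂ} (hm : m.re = 1) {a : ℝ} (ha : 0 < a)
    {g : ℝ → ℂ} (hg : MemLp g 2 (volume.restrict (Ioo 0 a))) :
    Tendsto (fun x : ℝ =>
        2 * m * (x : ℂ) ^ (-(1:ℂ)/2 - m) * (∫ y in Ioo (0:ℝ) a, GKer m x y * g y)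
          - ∫ y in Ioo x a, (y : ℂ) ^ ((1:ℂ)/2 - m) * g y)
      (𝓝[>] 0) (𝓝 0) := by
  have hgInt : IntegrableOn (fun y => ‖g y‖^(2:ℝ)) (Ioo 0 a) volume := by
    have := hg.integrable_norm_rpow (by norm_num) (by norm_num)
    simpa [IntegrableOn] using this
  have hFt : Tendsto (fun x => Real.sqrt (∫ y in Ioc (0:ℝ) x, ‖g y‖^(2:ℝ))) (𝓝[>] (0:ℝ)) (𝓝 0) := by
    have h0 := primitive_tendsto_zero ha hgInt
    have := (Real.continuous_sqrt.tendsto 0).comp h0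
    simpa [Function.comp_def] using this
  refine squeeze_zero_norm' ?_ hFt
  filter_upwards [Ioo_mem_nhdsGT_of_mem (Set.mem_Ico.mpr ⟨le_rfl, ha⟩)] with x hx
  set I₁ := ∫ y in Ioo x a, (y : ℂ) ^ ((1:ℂ)/2 - m) * g y with hI₁
  set I₂ := ∫ y in Ioo (0:ℝ) x, (y : ℂ) ^ ((1:ℂ)/2 + m) * g y with hI₂
  have hxne : (x:ℂ) ≠ 0 := Complex.ofReal_ne_zero.mpr hx.1.ne'
  have hm0 : m ≠ 0 := by intro h; rw [h] at hm; simp at hm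
  have e1 : (x:ℂ)^(-(1:ℂ)/2-m) * (x:ℂ)^((1:ℂ)/2+m) = 1 := by
    rw [← Complex.cpow_add _ _ hxne, show -(1:ℂ)/2-m + ((1:ℂ)/2+m) = 0 by ring, Complex.cpow_zero]
  have e2 : (x:ℂ)^(-(1:ℂ)/2-m) * (x:ℂ)^((1:ℂ)/2-m) = (x:ℂ)^(-(2*m)) := by
    rw [← Complex.cpow_add _ _ hxne, show -(1:ℂ)/2-m + ((1:ℂ)/2-m) = -(2*m) by ring]
  have key : 2 * m * (x : ℂ) ^ (-(1:ℂ)/2 - m) * (∫ y in Ioo (0:ℝ) a, GKer m x y * g y) - I₁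
      = (x:ℂ)^(-(2*m)) * I₂ := by
    rw [GKer_split hm hx hg, ← hI₁, ← hI₂]
    have expand : 2 * m * (x : ℂ) ^ (-(1:ℂ)/2 - m) *
        (1/(2*m) * ((x:ℂ)^((1:ℂ)/2+m) * I₁) + 1/(2*m) * ((x:ℂ)^((1:ℂ)/2-m) * I₂))
        = ((x:ℂ)^(-(1:ℂ)/2-m) * (x:ℂ)^((1:ℂ)/2+m)) * I₁
          + ((x:ℂ)^(-(1:ℂ)/2-m) * (x:ℂ)^((1:ℂ)/2-m)) * I₂ := by
      field_simp
    rw [expand, e1, e2, one_mul]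
    ring
  rw [key, norm_mul, norm_cpow_pos hx.1]
  have hre : (-(2*m)).re = -2 := by simp [Complex.mul_re, hm]
  rw [hre]
  have hxx : x ^ (-2:ℝ) * x^2 = 1 := by
    rw [show (x:ℝ)^2 = x ^ ((2:ℕ):ℝ) from (Real.rpow_natCast x 2).symm,
      ← Real.rpow_add hx.1]
    norm_num
  calc x ^ (-2:ℝ) * ‖I₂‖
      ≤ x ^ (-2:ℝ) * (x^2 * Real.sqrt (∫ y in Ioc (0:ℝ) x, ‖g y‖^(2:ℝ))) := by
        exact mul_le_mul_of_nonneg_left (I2_bound hm hx hg) (Real.rpow_nonneg hx.1.le _)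
    _ = Real.sqrt (∫ y in Ioc (0:ℝ) x, ‖g y‖^(2:ℝ)) := by
        rw [← mul_assoc, hxx, one_mul]


lemma memL2_Ioi_sub {g : ℝ → ℂ} (hg : MemLp g 2 (volume.restrict (Ioi 0)))
    {s : Set ℝ} (hs : MeasurableSet s) (hsub : s ⊆ Ioi 0) :
    MemLp g 2 (volume.restrict s) := by
  have hrr : (volume.restrict (Ioi 0)).restrict s = volume.restrict s := by
    rw [Measure.restrict_restrict hs, inter_eq_self_of_subset_left hsub]
  exact hrr ▸ hg.restrict s

/-- Cauchy–Schwarz bound: on `Ioc u v ⊆ (0,∞)`, `∫ ‖h‖ ≤ √v * √(∫_{Ioc 0 v} ‖h‖²)`. -/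
lemma l2_l1_bound {h : ℝ → ℂ} (hL2 : MemLp h 2 (volume.restrict (Ioi 0)))
    {u v : ℝ} (hu : 0 < u) (huv : u ≤ v) :
    ∫ t in Ioc u v, ‖h t‖ ≤ Real.sqrt v * Real.sqrt (∫ t in Ioc (0:ℝ) v, ‖h t‖^(2:ℝ)) := by
  have htarg : MemLp h 2 (volume.restrict (Ioc u v)) :=
    memL2_Ioi_sub hL2 measurableSet_Ioc (fun t ht => hu.trans_le ht.1.le)
  have hone : MemLp (fun _ : ℝ => (1:ℝ)) 2 (volume.restrict (Ioc u v)) := memLp_const 1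
  have cs := csInt (μ := volume.restrict (Ioc u v))
    (ae_of_all _ (fun _ => zero_le_one)) (ae_of_all _ (fun t => norm_nonneg (h t)))
    hone htarg.norm
  simp only [one_mul] at cs
  have h1 : (∫ (_ : ℝ) in Ioc u v, (1:ℝ)^(2:ℝ)) = v - u := by
    simp [huv, Real.volume_Ioc, ENNReal.toReal_ofReal (by linarith : (0:ℝ) ≤ v - u)]
  have hIntv : IntegrableOn (fun t => ‖h t‖^(2:ℝ)) (Ioc 0 v) volume := by
    have hm := memL2_Ioi_sub hL2 measurableSet_Ioc (fun t (ht : t ∈ Ioc (0:ℝ) v) => ht.1)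
    have := hm.integrable_norm_rpow (by norm_num) (by norm_num)
    simpa [IntegrableOn] using this
  have hmono : (∫ t in Ioc u v, ‖h t‖^(2:ℝ)) ≤ ∫ t in Ioc (0:ℝ) v, ‖h t‖^(2:ℝ) := by
    refine setIntegral_mono_set hIntv ?_ (HasSubset.Subset.eventuallyLE (Ioc_subset_Ioc_left hu.le))
    exact ae_of_all _ (fun t => Real.rpow_nonneg (norm_nonneg _) _)
  calc ∫ t in Ioc u v, ‖h t‖
      ≤ (∫ (_ : ℝ) in Ioc u v, (1:ℝ)^(2:ℝ)) ^ ((1:ℝ)/2) * (∫ t in Ioc u v, ‖h t‖^(2:ℝ)) ^ ((1:ℝ)/2) := cs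
    _ ≤ Real.sqrt v * Real.sqrt (∫ t in Ioc (0:ℝ) v, ‖h t‖^(2:ℝ)) := by
        rw [h1, ← Real.sqrt_eq_rpow, ← Real.sqrt_eq_rpow]
        refine mul_le_mul (Real.sqrt_le_sqrt (by linarith)) (Real.sqrt_le_sqrt hmono)
          (Real.sqrt_nonneg _) (Real.sqrt_nonneg _)

lemma deriv_bound {f₀ f'' : ℝ → ℂ}
    (hac : ∀ u ∈ Ioi (0:ℝ), ∀ v ∈ Ioi (0:ℝ), IntervalIntegrable f'' volume u v ∧
      deriv f₀ v - deriv f₀ u = ∫ t in u..v, f'' t)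
    (hL2 : MemLp f'' 2 (volume.restrict (Ioi 0)))
    (hf0' : Tendsto (deriv f₀) (𝓝[>] (0:ℝ)) (𝓝 0))
    {v : ℝ} (hv : 0 < v) :
    ‖deriv f₀ v‖ ≤ Real.sqrt v * Real.sqrt (∫ t in Ioc (0:ℝ) v, ‖f'' t‖^(2:ℝ)) := by
  set C := Real.sqrt v * Real.sqrt (∫ t in Ioc (0:ℝ) v, ‖f'' t‖^(2:ℝ)) with hC
  have ev : ∀ᶠ u in 𝓝[>] (0:ℝ), ‖deriv f₀ v‖ ≤ ‖deriv f₀ u‖ + C := by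
    filter_upwards [Ioo_mem_nhdsGT_of_mem (Set.mem_Ico.mpr ⟨le_rfl, hv⟩)] with u hu
    obtain ⟨hint, heq⟩ := hac u hu.1 v hv
    have h1 : ‖deriv f₀ v - deriv f₀ u‖ ≤ C := by
      rw [heq]
      calc ‖∫ t in u..v, f'' t‖ ≤ ∫ t in u..v, ‖f'' t‖ :=
            intervalIntegral.norm_integral_le_integral_norm hu.2.le
        _ = ∫ t in Ioc u v, ‖f'' t‖ := intervalIntegral.integral_of_le hu.2.le
        _ ≤ C := l2_l1_bound hL2 hu.1 hu.2.le
    calc ‖deriv f₀ v‖ = ‖(deriv f₀ v - deriv f₀ u) + deriv f₀ u‖ := by ring_nf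
      _ ≤ ‖deriv f₀ v - deriv f₀ u‖ + ‖deriv f₀ u‖ := norm_add_le _ _
      _ ≤ C + ‖deriv f₀ u‖ := by gcongr
      _ = ‖deriv f₀ u‖ + C := by ring
  have hlim : Tendsto (fun u => ‖deriv f₀ u‖ + C) (𝓝[>] (0:ℝ)) (𝓝 (0 + C)) := by
    have : Tendsto (fun u => ‖deriv f₀ u‖) (𝓝[>] (0:ℝ)) (𝓝 ‖(0:ℂ)‖) := hf0'.norm
    simpa using this.add_const C
  have := ge_of_tendsto hlim ev
  simpa using this

lemma f0_bound {f₀ f'' : ℝ → ℂ}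
    (hdiff : ∀ x ∈ Ioi (0:ℝ), DifferentiableAt ℝ f₀ x)
    (hac : ∀ u ∈ Ioi (0:ℝ), ∀ v ∈ Ioi (0:ℝ), IntervalIntegrable f'' volume u v ∧
      deriv f₀ v - deriv f₀ u = ∫ t in u..v, f'' t)
    (hL2 : MemLp f'' 2 (volume.restrict (Ioi 0)))
    (hf0 : Tendsto f₀ (𝓝[>] (0:ℝ)) (𝓝 0))
    (hf0' : Tendsto (deriv f₀) (𝓝[>] (0:ℝ)) (𝓝 0))
    {v : ℝ} (hv : 0 < v) :
    ‖f₀ v‖ ≤ (Real.sqrt v * Real.sqrt (∫ t in Ioc (0:ℝ) v, ‖f'' t‖^(2:ℝ))) * v := by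
  set C := Real.sqrt v * Real.sqrt (∫ t in Ioc (0:ℝ) v, ‖f'' t‖^(2:ℝ)) with hCdef
  have ev : ∀ᶠ u in 𝓝[>] (0:ℝ), ‖f₀ v‖ ≤ ‖f₀ u‖ + C * v := by
    filter_upwards [Ioo_mem_nhdsGT_of_mem (Set.mem_Ico.mpr ⟨le_rfl, hv⟩)] with u hu
    -- continuity of deriv f₀ on [u, v]
    have huv : u ≤ v := hu.2.le
    have hu0 : (0:ℝ) < u := hu.1
    have hIcc : Icc u v ⊆ Ioi (0:ℝ) := fun t ht => hu0.trans_le ht.1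
    have hf''i : IntegrableOn f'' (uIcc u v) volume := by
      rw [uIcc_of_le huv]
      have h1 : IntegrableOn f'' (Ioc u v) volume :=
        (intervalIntegrable_iff_integrableOn_Ioc_of_le huv).mp (hac u hu0 v hv).1
      exact h1.congr_set_ae Ioc_ae_eq_Icc.symm
    have hdc : ContinuousOn (deriv f₀) (Icc u v) := by
      have hprim : ContinuousOn (fun t => deriv f₀ u + ∫ s in u..t, f'' s) (uIcc u v) :=
        continuousOn_const.add (intervalIntegral.continuousOn_primitive_interval hf''i)
      rw [uIcc_of_le huv] at hprim
      refine hprim.congr fun t ht => ?_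
      have := (hac u hu0 t (hIcc ht)).2
      beta_reduce; rw [← this]; ring
    have hII : IntervalIntegrable (deriv f₀) volume u v := by
      rw [← uIcc_of_le huv] at hdc
      exact hdc.intervalIntegrable
    have hFTC : ∫ t in u..v, deriv f₀ t = f₀ v - f₀ u := by
      refine intervalIntegral.integral_eq_sub_of_hasDerivAt (fun t ht => ?_) hII
      rw [uIcc_of_le huv] at ht
      exact (hdiff t (hIcc ht)).hasDerivAt
    have hbd : ‖∫ t in u..v, deriv f₀ t‖ ≤ C * |v - u| := by
      refine intervalIntegral.norm_integral_le_of_norm_le_const fun t ht => ?_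
      rw [uIoc_of_le huv] at ht
      have ht0 : (0:ℝ) < t := hu0.trans ht.1
      have h1 : ‖deriv f₀ t‖ ≤ Real.sqrt t * Real.sqrt (∫ s in Ioc (0:ℝ) t, ‖f'' s‖^(2:ℝ)) :=
        deriv_bound hac hL2 hf0' ht0
      have hIv : IntegrableOn (fun s => ‖f'' s‖^(2:ℝ)) (Ioc 0 v) volume := by
        have hm := memL2_Ioi_sub hL2 measurableSet_Ioc (fun s (hs : s ∈ Ioc (0:ℝ) v) => hs.1)
        have := hm.integrable_norm_rpow (by norm_num) (by norm_num)
        simpa [IntegrableOn] using this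
      have hmono : (∫ s in Ioc (0:ℝ) t, ‖f'' s‖^(2:ℝ)) ≤ ∫ s in Ioc (0:ℝ) v, ‖f'' s‖^(2:ℝ) :=
        setIntegral_mono_set hIv (ae_of_all _ (fun s => Real.rpow_nonneg (norm_nonneg _) _))
          (HasSubset.Subset.eventuallyLE (Ioc_subset_Ioc_right ht.2))
      refine h1.trans ?_
      exact mul_le_mul (Real.sqrt_le_sqrt ht.2) (Real.sqrt_le_sqrt hmono)
        (Real.sqrt_nonneg _) (Real.sqrt_nonneg _)
    have habs : |v - u| ≤ v := by rw [abs_of_nonneg (by linarith)]; linarith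
    calc ‖f₀ v‖ = ‖(f₀ v - f₀ u) + f₀ u‖ := by ring_nf
      _ ≤ ‖f₀ v - f₀ u‖ + ‖f₀ u‖ := norm_add_le _ _
      _ = ‖∫ t in u..v, deriv f₀ t‖ + ‖f₀ u‖ := by rw [hFTC]
      _ ≤ C * |v - u| + ‖f₀ u‖ := by gcongr
      _ ≤ C * v + ‖f₀ u‖ := by
          have hC0 : 0 ≤ C := mul_nonneg (Real.sqrt_nonneg _) (Real.sqrt_nonneg _)
          nlinarith
      _ = ‖f₀ u‖ + C * v := by ring
  have hlim : Tendsto (fun u => ‖f₀ u‖ + C * v) (𝓝[>] (0:ℝ)) (𝓝 (0 + C * v)) := by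
    have : Tendsto (fun u => ‖f₀ u‖) (𝓝[>] (0:ℝ)) (𝓝 ‖(0:ℂ)‖) := hf0.norm
    simpa using this.add_const (C * v)
  have := ge_of_tendsto hlim ev
  simpa using this

lemma primitive_tendsto_zero' {h : ℝ → ℝ} {b : ℝ} (hb : 0 < b)
    (hint : IntegrableOn h (Ioo 0 b) volume) :
    Tendsto (fun x => ∫ t in Ioc (0:ℝ) x, h t) (𝓝[>] 0) (𝓝 0) := by
  have hicc : IntegrableOn h (Icc 0 b) volume := hint.congr_set_ae Ioo_ae_eq_Icc.symm
  have hcont := intervalIntegral.continuousOn_primitive (f := h) (μ := volume) (a := 0) (b := b) hicc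
  have h0 : ContinuousWithinAt (fun x => ∫ t in Ioc (0:ℝ) x, h t) (Icc 0 b) 0 :=
    hcont 0 ⟨le_rfl, hb.le⟩
  have h00 : (∫ t in Ioc (0:ℝ) (0:ℝ), h t) = 0 := by simp
  have := h0.tendsto
  rw [h00] at this
  refine this.mono_left (nhdsWithin_le_iff.mpr ?_)
  filter_upwards [Ioo_mem_nhdsGT_of_mem (Set.mem_Ico.mpr ⟨le_rfl, hb⟩)] with x hx
  exact ⟨hx.1.le, hx.2.le⟩

lemma norm_cpow_pos' {x : ℝ} (hx : 0 < x) (w : ℂ) : ‖(x:ℂ)^w‖ = x ^ w.re := by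
  rw [Complex.norm_cpow_eq_rpow_re_of_pos hx]

lemma H02_decay {m : ℂ} (hm : m.re = 1) {f₀ f'' : ℝ → ℂ}
    (hdiff : ∀ x ∈ Ioi (0:ℝ), DifferentiableAt ℝ f₀ x)
    (hac : ∀ u ∈ Ioi (0:ℝ), ∀ v ∈ Ioi (0:ℝ), IntervalIntegrable f'' volume u v ∧
      deriv f₀ v - deriv f₀ u = ∫ t in u..v, f'' t)
    (hL2 : MemLp f'' 2 (volume.restrict (Ioi 0)))
    (hf0 : Tendsto f₀ (𝓝[>] (0:ℝ)) (𝓝 0))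
    (hf0' : Tendsto (deriv f₀) (𝓝[>] (0:ℝ)) (𝓝 0)) :
    Tendsto (fun x : ℝ => (x:ℂ)^(-(1:ℂ)/2 - m) * f₀ x) (𝓝[>] (0:ℝ)) (𝓝 0) := by
  have hIb : IntegrableOn (fun s => ‖f'' s‖^(2:ℝ)) (Ioo 0 1) volume := by
    have hm2 := memL2_Ioi_sub hL2 measurableSet_Ioo (fun s (hs : s ∈ Ioo (0:ℝ) 1) => hs.1)
    have := hm2.integrable_norm_rpow (by norm_num) (by norm_num)
    simpa [IntegrableOn] using this
  have hD : Tendsto (fun x => Real.sqrt (∫ t in Ioc (0:ℝ) x, ‖f'' t‖^(2:ℝ))) (𝓝[>] (0:ℝ)) (𝓝 0) := by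
    have h0 := primitive_tendsto_zero' one_pos hIb
    have := (Real.continuous_sqrt.tendsto 0).comp h0
    simpa [Function.comp_def] using this
  refine squeeze_zero_norm' ?_ hD
  filter_upwards [self_mem_nhdsWithin] with x hx
  have hx0 : (0:ℝ) < x := hx
  have hre : (-(1:ℂ)/2 - m).re = -(3/2) := by
    simp [Complex.sub_re, hm]; norm_num
  rw [norm_mul, norm_cpow_pos' hx0, hre]
  set S := Real.sqrt (∫ t in Ioc (0:ℝ) x, ‖f'' t‖^(2:ℝ)) with hS
  have hb := f0_bound hdiff hac hL2 hf0 hf0' hx0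
  rw [← hS] at hb
  have hkey : x ^ (-(3/2):ℝ) * (Real.sqrt x * x) = 1 := by
    have h1 : x ^ ((1:ℝ)/2) * x = x ^ ((3:ℝ)/2) := by
      nth_rewrite 2 [← Real.rpow_one x]
      rw [← Real.rpow_add hx0]; norm_num
    rw [Real.sqrt_eq_rpow, h1, ← Real.rpow_add hx0]
    norm_num [Real.rpow_zero]
  calc x ^ (-(3/2):ℝ) * ‖f₀ x‖ ≤ x ^ (-(3/2):ℝ) * ((Real.sqrt x * S) * x) := by
        refine mul_le_mul_of_nonneg_left hb (Real.rpow_nonneg hx0.le _)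
    _ = (x ^ (-(3/2):ℝ) * (Real.sqrt x * x)) * S := by ring
    _ = S := by rw [hkey, one_mul]

/-- boundary behaviour of `G_m^a g` for `Re m = 1`. -/
theorem re_eq_one_boundary_behaviour (m : ℂ) (hm : m.re = 1) (a : ℝ) (ha : 0 < a)
    (g : ℝ → ℂ) (hg : MemLp g 2 (volume.restrict (Set.Ioo 0 a))) :
    Tendsto (fun x : ℝ =>
        2 * m * (x : ℂ) ^ (-(1:ℂ)/2 - m) * (∫ y in Set.Ioo (0:ℝ) a, GKer m x y * g y)
          - ∫ y in Set.Ioo x a, (y : ℂ) ^ ((1:ℂ)/2 - m) * g y)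
      (𝓝[>] 0) (𝓝 0) ∧
    ((¬ ∃ L : ℂ, Tendsto (fun x : ℝ => ∫ y in Set.Ioo x a, (y : ℂ) ^ ((1:ℂ)/2 - m) * g y)
        (𝓝[>] 0) (𝓝 L)) →
      ∀ ξ : ℝ → ℂ, IsCutoff ξ →
        ¬ ∃ (c : ℂ) (f₀ : ℝ → ℂ), MemH02 f₀ ∧ ∃ ε > (0:ℝ), ∀ x ∈ Set.Ioo (0:ℝ) ε,
          (∫ y in Set.Ioo (0:ℝ) a, GKer m x y * g y)
            = f₀ x + c * (x : ℂ) ^ ((1:ℂ)/2 + m) * ξ x) := by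
  constructor
  · exact part1 hm ha hg
  · intro hNoLim ξ hξ hcon
    obtain ⟨c, f₀, ⟨f'', hf₀L2, hAC, hf''L2, hf0, hf0'⟩, ε, hε, heq⟩ := hcon
    obtain ⟨hdiff, hac⟩ := hAC
    obtain ⟨hξ1, hξ2, εξ, hεξ, hξeq⟩ := hξ
    apply hNoLim
    refine ⟨2 * m * c, ?_⟩
    have hT := part1 hm ha hg
    have hdec := H02_decay hm hdiff hac hf''L2 hf0 hf0'
    have hξt : Tendsto ξ (𝓝[>] (0:ℝ)) (𝓝 1) := by
      have hev : ∀ᶠ x in 𝓝[>] (0:ℝ), ξ x = 1 := by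
        filter_upwards [Ioo_mem_nhdsGT_of_mem (Set.mem_Ico.mpr ⟨le_rfl, hεξ⟩)] with x hx
        exact hξeq x hx.2
      exact tendsto_const_nhds.congr' (by filter_upwards [hev] with x hx using hx.symm)
    set T : ℝ → ℂ := fun x =>
      2 * m * (x : ℂ) ^ (-(1:ℂ)/2 - m) * (∫ y in Set.Ioo (0:ℝ) a, GKer m x y * g y)
        - ∫ y in Set.Ioo x a, (y : ℂ) ^ ((1:ℂ)/2 - m) * g y with hTdef
    have hcomb : Tendsto
        (fun x : ℝ => 2 * m * ((x:ℂ)^(-(1:ℂ)/2 - m) * f₀ x) + 2 * m * c * ξ x - T x)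
        (𝓝[>] (0:ℝ)) (𝓝 (2 * m * 0 + 2 * m * c * 1 - 0)) :=
      ((hdec.const_mul (2*m)).add (hξt.const_mul (2*m*c))).sub hT
    have hval : (2 * m * 0 + 2 * m * c * 1 - 0 : ℂ) = 2 * m * c := by ring
    rw [hval] at hcomb
    refine hcomb.congr' ?_
    have hδ : 0 < min ε (min εξ a) := lt_min hε (lt_min hεξ ha)
    filter_upwards [Ioo_mem_nhdsGT_of_mem (Set.mem_Ico.mpr ⟨le_rfl, hδ⟩)] with x hx
    have hx0 : (0:ℝ) < x := hx.1
    have hxε : x < ε := hx.2.trans_le (min_le_left _ _)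
    have hxa : x < a := hx.2.trans_le ((min_le_right _ _).trans (min_le_right _ _))
    have hxne : (x:ℂ) ≠ 0 := Complex.ofReal_ne_zero.mpr hx0.ne'
    have e1 : (x:ℂ)^(-(1:ℂ)/2-m) * (x:ℂ)^((1:ℂ)/2+m) = 1 := by
      rw [← Complex.cpow_add _ _ hxne, show -(1:ℂ)/2-m + ((1:ℂ)/2+m) = 0 by ring,
        Complex.cpow_zero]
    have hg_eq := heq x ⟨hx0, hxε⟩
    simp only [hTdef]
    rw [hg_eq]
    linear_combination (-(2*m*c*ξ x)) * e1


end
end
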